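/- arXiv:2605.26263 — 12 statements merged into one kernel-verified Lean document; each statement's English description precedes it below -/
import Mathlib

section
/- Let q be an odd prime power and a, b, c ∈ F_q. The q-linearized polynomial L(X) = aX^{q²} + bX^q + cX has no roots in F_{q³}* if and only if a³ + b³ + c³ - 3abc ≠ 0. -/
/-!
Let `σ` be the `q`-Frobenius of `L / K`; it has order `[L : K] = 3`, and `L(x) = aσ²x + bσx + cx`.
Applying `σ` to `L(x) = 0` twice gives a circulant linear system in `x, σx, σ²x` whose determinant
is `a³ + b³ + c³ - 3abc`, so a nonzero root forces this to vanish. Conversely, if it vanishes,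
take a nonzero kernel vector `v ∈ K³` of the circulant matrix: by Dedekind's independence of
`1, σ, σ²`, some `y` makes `x = v₀y + v₁σy + v₂σ²y` nonzero, and `x` is a root.
-/

open Matrix

theorem circulant_det_mul_eq_zero {R : Type*} [CommRing R] {a b c x y z : R}
    (h₀ : a * z + b * y + c * x = 0) (h₁ : a * x + b * z + c * y = 0)
    (h₂ : a * y + b * x + c * z = 0) :
    (a ^ 3 + b ^ 3 + c ^ 3 - 3 * a * b * c) * x = 0 := by
  linear_combination (c * c - a * b) * h₀ + (a * a - b * c) * h₁ + (b * b - c * a) * h₂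

theorem det_circulant_fin_three {R : Type*} [CommRing R] (a b c : R) :
    (circulant ![c, b, a]).det = a ^ 3 + b ^ 3 + c ^ 3 - 3 * a * b * c := by
  rw [det_fin_three]
  simp [circulant_apply]
  ring

theorem exists_ne_zero_circulant_relations {K : Type*} [Field K] {a b c : K}
    (hD : a ^ 3 + b ^ 3 + c ^ 3 - 3 * a * b * c = 0) :
    ∃ v : Fin 3 → K, v ≠ 0 ∧ c * v 0 + a * v 1 + b * v 2 = 0 ∧
      b * v 0 + c * v 1 + a * v 2 = 0 ∧ a * v 0 + b * v 1 + c * v 2 = 0 := by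
  obtain ⟨v, hv, hMv⟩ := exists_mulVec_eq_zero_iff.mpr ((det_circulant_fin_three a b c).trans hD)
  refine ⟨v, hv, ?_⟩
  simpa [Fin.forall_fin_succ, mulVec, dotProduct, Fin.sum_univ_three, circulant_apply] using
    congrFun hMv

section

variable {K L : Type*} [Field K] [Field L] [Algebra K L]

theorem exists_sum_smul_pow_apply_ne_zero (σ : L ≃ₐ[K] L) {n : ℕ} (hn : n ≤ orderOf σ)
    {v : Fin n → K} (hv : v ≠ 0) : ∃ y, ∑ i, v i • (σ ^ (i : ℕ)) y ≠ 0 := by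
  have hinj : Function.Injective fun i : Fin n ↦ ((σ ^ (i : ℕ) : L ≃ₐ[K] L) : L →* L) :=
    fun i j hij ↦ Fin.ext <| pow_injOn_Iio_orderOf (x := σ) (i.2.trans_le hn) (j.2.trans_le hn)
      (AlgEquiv.ext fun x ↦ DFunLike.congr_fun hij x)
  have hli := ((linearIndependent_monoidHom L L).comp _ hinj).restrict_scalars' K
  by_contra! h
  exact hv <| funext <| Fintype.linearIndependent_iff.mp hli v (funext fun y ↦ by simpa using h y)

def linearizedPoly (σ : L ≃ₐ[K] L) (a b c : K) (x : L) : L := a • σ (σ x) + b • σ x + c • x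

variable {σ : L ≃ₐ[K] L} (hσ : orderOf σ = 3) {a b c : K}
include hσ

theorem apply_apply_apply_of_orderOf_eq_three (x : L) : σ (σ (σ x)) = x := by
  have h := DFunLike.congr_fun (pow_orderOf_eq_one σ) x
  rw [hσ] at h
  simpa [pow_succ, AlgEquiv.mul_apply] using h

theorem eq_zero_of_linearizedPoly_eq_zero (hD : a ^ 3 + b ^ 3 + c ^ 3 - 3 * a * b * c ≠ 0)
    {x : L} (hx : linearizedPoly σ a b c x = 0) : x = 0 := by
  have h₁ : linearizedPoly σ a b c (σ x) = 0 := by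
    simpa [linearizedPoly, apply_apply_apply_of_orderOf_eq_three hσ] using congrArg σ hx
  have h₂ : linearizedPoly σ a b c (σ (σ x)) = 0 := by
    simpa [linearizedPoly, apply_apply_apply_of_orderOf_eq_three hσ] using congrArg σ h₁
  simp only [linearizedPoly, apply_apply_apply_of_orderOf_eq_three hσ, Algebra.smul_def]
    at hx h₁ h₂
  have hDx : algebraMap K L (a ^ 3 + b ^ 3 + c ^ 3 - 3 * a * b * c) * x = 0 := by
    simpa [map_ofNat] using circulant_det_mul_eq_zero hx h₁ h₂
  exact (mul_eq_zero.mp hDx).resolve_left ((map_ne_zero _).mpr hD)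

theorem exists_ne_zero_linearizedPoly_eq_zero (hD : a ^ 3 + b ^ 3 + c ^ 3 - 3 * a * b * c = 0) :
    ∃ x ≠ 0, linearizedPoly σ a b c x = 0 := by
  obtain ⟨v, hv, h₀, h₁, h₂⟩ := exists_ne_zero_circulant_relations hD
  obtain ⟨y, hy⟩ := exists_sum_smul_pow_apply_ne_zero σ hσ.ge hv
  simp only [Fin.sum_univ_three, Fin.val_zero, Fin.val_one, Fin.val_two, pow_zero, pow_one, sq,
    AlgEquiv.one_apply, AlgEquiv.mul_apply] at hy
  refine ⟨_, hy, ?_⟩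
  simp only [linearizedPoly, map_add, map_smul, apply_apply_apply_of_orderOf_eq_three hσ]
  linear_combination (norm := module) h₀ • y + h₁ • σ y + h₂ • σ (σ y)

theorem forall_linearizedPoly_ne_zero_iff :
    (∀ x ≠ 0, linearizedPoly σ a b c x ≠ 0) ↔ a ^ 3 + b ^ 3 + c ^ 3 - 3 * a * b * c ≠ 0 := by
  refine ⟨fun h hD ↦ ?_, fun hD x hx h ↦ hx (eq_zero_of_linearizedPoly_eq_zero hσ hD h)⟩
  obtain ⟨x, hx, hroot⟩ := exists_ne_zero_linearizedPoly_eq_zero hσ hD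
  exact h x hx hroot

end

theorem stmt0_general (q : ℕ)
    (K L : Type) [Field K] [Field L] [Fintype K] [Fintype L] [Algebra K L]
    (hK : Fintype.card K = q) (hL : Fintype.card L = q ^ 3)
    (a b c : K) :
    (∀ x : L, x ≠ 0 →
        algebraMap K L a * x ^ q ^ 2 + algebraMap K L b * x ^ q + algebraMap K L c * x ≠ 0)
      ↔ a ^ 3 + b ^ 3 + c ^ 3 - 3 * a * b * c ≠ 0 := by
  set σ := FiniteField.frobeniusAlgEquivOfAlgebraic K L
  have hfinrank : Module.finrank K L = 3 := by
    refine Nat.pow_right_injective (hK ▸ Fintype.one_lt_card : 1 < q) ?_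
    simp only [← hK, ← Module.card_eq_pow_finrank, hL]
  have hσ : orderOf σ = 3 := (FiniteField.orderOf_frobeniusAlgEquivOfAlgebraic K L).trans hfinrank
  have hpoly (x : L) : linearizedPoly σ a b c x =
      algebraMap K L a * x ^ q ^ 2 + algebraMap K L b * x ^ q + algebraMap K L c * x := by
    simp [linearizedPoly, σ, Algebra.smul_def, hK, ← pow_mul, sq]
  simpa only [hpoly] using forall_linearizedPoly_ne_zero_iff hσ (a := a) (b := b) (c := c)

theorem stmt0 (q : ℕ) (hodd : Odd q) (hpp : ∃ p n : ℕ, Nat.Prime p ∧ 0 < n ∧ q = p ^ n)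
    (K L : Type) [Field K] [Field L] [Fintype K] [Fintype L] [Algebra K L]
    (hK : Fintype.card K = q) (hL : Fintype.card L = q ^ 3)
    (a b c : K) :
    (∀ x : L, x ≠ 0 →
        algebraMap K L a * x ^ q ^ 2 + algebraMap K L b * x ^ q + algebraMap K L c * x ≠ 0)
      ↔ a ^ 3 + b ^ 3 + c ^ 3 - 3 * a * b * c ≠ 0 :=
  stmt0_general q K L hK hL a b c
end

section
/- Let q be an odd prime power. For every nonzero ε ∈ F_{q³}, the 3×3 matrix A_ε with rows (2ε + ε^q + ε^{q²}, (ε + ε^{q²})^q, (ε + ε^q)^{q²}), (ε + ε^q, (2ε + ε^q + ε^{q²})^q, (ε + ε^{q²})^{q²}), (ε + ε^{q²}, (ε + ε^q)^q, (2ε + ε^q + ε^{q²})^{q²}) has nonzero determinant; in fact det(A_ε) = 4(ε^{q²}+ε^q)(ε^{q²}+ε)(ε^q+ε). -/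
theorem stmt2 (q : ℕ) (hodd : Odd q) (hpp : ∃ p n : ℕ, Nat.Prime p ∧ 0 < n ∧ q = p ^ n)
    (L : Type) [Field L] [Fintype L] (hL : Fintype.card L = q ^ 3)
    (ε : L) (hε : ε ≠ 0) :
    Matrix.det !![2 * ε + ε ^ q + ε ^ q ^ 2, (ε + ε ^ q ^ 2) ^ q, (ε + ε ^ q) ^ q ^ 2;
                  ε + ε ^ q, (2 * ε + ε ^ q + ε ^ q ^ 2) ^ q, (ε + ε ^ q ^ 2) ^ q ^ 2;
                  ε + ε ^ q ^ 2, (ε + ε ^ q) ^ q, (2 * ε + ε ^ q + ε ^ q ^ 2) ^ q ^ 2]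
        = 4 * (ε ^ q ^ 2 + ε ^ q) * (ε ^ q ^ 2 + ε) * (ε ^ q + ε) ∧
    Matrix.det !![2 * ε + ε ^ q + ε ^ q ^ 2, (ε + ε ^ q ^ 2) ^ q, (ε + ε ^ q) ^ q ^ 2;
                  ε + ε ^ q, (2 * ε + ε ^ q + ε ^ q ^ 2) ^ q, (ε + ε ^ q ^ 2) ^ q ^ 2;
                  ε + ε ^ q ^ 2, (ε + ε ^ q) ^ q, (2 * ε + ε ^ q + ε ^ q ^ 2) ^ q ^ 2] ≠ 0 := by
  obtain ⟨p, n, hp, hn, rfl⟩ := hpp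
  haveI : Fact (Nat.Prime p) := ⟨hp⟩
  -- the characteristic of L is p
  have hcast : ((p ^ n) ^ 3 : ℕ) = (0 : L) := by
    rw [← hL]; exact Nat.cast_card_eq_zero L
  have hdvd : ringChar L ∣ (p ^ n) ^ 3 := (ringChar.spec L _).mp (by exact_mod_cast hcast)
  have hrp : ringChar L = p := by
    have := (Nat.Prime.dvd_of_dvd_pow (CharP.char_is_prime L (ringChar L)))
      ((Nat.Prime.dvd_of_dvd_pow (CharP.char_is_prime L (ringChar L))) hdvd)
    exact ((Nat.prime_dvd_prime_iff_eq (CharP.char_is_prime L (ringChar L)) hp).mp this)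
  haveI hcharL : CharP L p := hrp ▸ ringChar.charP L
  have hpodd : Odd p := by
    rcases hp.eq_two_or_odd' with h2 | h
    · exfalso
      rw [h2] at hodd
      exact (Nat.not_odd_iff_even.mpr (Nat.even_pow.mpr ⟨even_two, hn.ne'⟩)) hodd
    · exact h
  -- Frobenius additivity
  have hadd : ∀ x y : L, (x + y) ^ p ^ n = x ^ p ^ n + y ^ p ^ n := fun x y =>
    add_pow_char_pow x y p n
  have h2q : (2 : L) ^ p ^ n = 2 := by
    rw [show (2 : L) = 1 + 1 by norm_num, hadd, one_pow]
  have hmul : ∀ x y : L, (x * y) ^ p ^ n = x ^ p ^ n * y ^ p ^ n := fun x y => mul_pow x y _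
  -- x ^ q ^ 3 = x
  have hcard : ∀ x : L, x ^ (p ^ n) ^ 3 = x := fun x => by
    rw [← hL]; exact FiniteField.pow_card x
  set a := ε with ha
  set b := ε ^ p ^ n with hb
  set c := ε ^ (p ^ n) ^ 2 with hc
  have hbc : b ^ p ^ n = c := by
    rw [hb, hc, ← pow_mul, ← pow_two]
  have hca : c ^ p ^ n = a := by
    rw [hc, ← pow_mul, ← pow_succ]
    exact hcard ε
  -- rewrite all entries
  have hab : a ^ p ^ n = b := by rw [ha, ← hb]
  clear_value a b c
  have e1 : (a + c) ^ p ^ n = b + a := by rw [hadd, hab, hca]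
  have e5 : (a + b) ^ p ^ n = b + c := by rw [hadd, hab, hbc]
  have e3 : (2 * a + b + c) ^ p ^ n = 2 * b + c + a := by
    rw [hadd, hadd, hmul, h2q, hab, hbc, hca]
  have key : ∀ x : L, x ^ (p ^ n) ^ 2 = (x ^ p ^ n) ^ p ^ n := fun x => by
    rw [pow_two, pow_mul]
  have e2 : (a + b) ^ (p ^ n) ^ 2 = c + a := by
    rw [key (a + b), e5, hadd, hbc, hca]
  have e4 : (a + c) ^ (p ^ n) ^ 2 = c + b := by
    rw [key (a + c), e1, hadd, hab, hbc]
  have e6 : (2 * a + b + c) ^ (p ^ n) ^ 2 = 2 * c + a + b := by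
    rw [key (2 * a + b + c), e3, hadd, hadd, hmul, h2q, hab, hbc, hca]
  rw [e1, e2, e3, e4, e5, e6, Matrix.det_fin_three]
  simp
  constructor
  · ring
  · -- nonzero
    have h2 : (2 : L) ≠ 0 := by
      intro h
      have := (CharP.cast_eq_zero_iff L p 2).mp (by exact_mod_cast h)
      have hp2 := (Nat.prime_dvd_prime_iff_eq hp Nat.prime_two).mp this
      rw [hp2] at hpodd
      have := Nat.odd_iff.mp hpodd
      omega
    have hba : b + a ≠ 0 := by
      intro h
      have hb' : b = -a := by linear_combination h
      have hc' : c = a := by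
        have h1 : c = (-a) ^ p ^ n := by rw [← hbc, hb']
        rw [Odd.neg_pow hodd, hab, hb'] at h1
        linear_combination h1
      have h4 : a = b := by
        have h1 : a = c ^ p ^ n := hca.symm
        rw [hc', hab] at h1
        exact h1
      rw [hb'] at h4
      have h5 : (2 : L) * a = 0 := by linear_combination h4
      rcases mul_eq_zero.mp h5 with h | h
      · exact h2 h
      · exact hε (ha ▸ h)
    have hca' : c + a ≠ 0 := by
      intro h
      have hc' : c = -a := by linear_combination h
      have h1 : a = (-a) ^ p ^ n := by conv_lhs => rw [← hca, hc']
      rw [Odd.neg_pow hodd, hab] at h1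
      exact hba (by linear_combination h1)
    have hcb : c + b ≠ 0 := by
      intro h
      have h1 : (b + a) ^ p ^ n = 0 := by rw [hadd, hbc, hab]; linear_combination h
      exact hba ((pow_eq_zero_iff (pow_ne_zero n hp.pos.ne' : p ^ n ≠ 0)).mp h1)
    intro h
    have h' : 4 * (c + b) * (c + a) * (b + a) = 0 := by linear_combination h
    rcases mul_eq_zero.mp h' with h | h
    · rcases mul_eq_zero.mp h with h | h
      · rcases mul_eq_zero.mp h with h | h
        · exact h2 (by rcases mul_eq_zero.mp (by linear_combination h : (2:L)*2 = 0) with h|h <;> exact h)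
        · exact hcb h
      · exact hca' h
    · exact hba h
end

section
/- Let q be an odd prime power. For every nonzero ε ∈ F_{q³}, the 3×3 matrix B_ε with rows (2ε - ε^q - ε^{q²}, (2ε^{q²} - ε)^q, (2ε^q - ε)^{q²}), (2ε^q - ε, (2ε - ε^q - ε^{q²})^q, (2ε^{q²} - ε)^{q²}), (2ε^{q²} - ε, (2ε^q - ε)^q, (2ε - ε^q - ε^{q²})^{q²}) has nonzero determinant; in fact det(B_ε) = 2(ε^{q²} - ε^q + ε)(ε^{q²} + ε^q - ε)(-ε^{q²} + ε^q + ε). -/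
theorem stmt3 (q : ℕ) (hodd : Odd q) (hpp : ∃ p n : ℕ, Nat.Prime p ∧ 0 < n ∧ q = p ^ n)
    (L : Type) [Field L] [Fintype L] (hL : Fintype.card L = q ^ 3)
    (ε : L) (hε : ε ≠ 0) :
    Matrix.det !![2 * ε - ε ^ q - ε ^ q ^ 2, (2 * ε ^ q ^ 2 - ε) ^ q, (2 * ε ^ q - ε) ^ q ^ 2;
                  2 * ε ^ q - ε, (2 * ε - ε ^ q - ε ^ q ^ 2) ^ q, (2 * ε ^ q ^ 2 - ε) ^ q ^ 2;
                  2 * ε ^ q ^ 2 - ε, (2 * ε ^ q - ε) ^ q, (2 * ε - ε ^ q - ε ^ q ^ 2) ^ q ^ 2]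
        = 2 * (ε ^ q ^ 2 - ε ^ q + ε) * (ε ^ q ^ 2 + ε ^ q - ε) * (-ε ^ q ^ 2 + ε ^ q + ε) ∧
    Matrix.det !![2 * ε - ε ^ q - ε ^ q ^ 2, (2 * ε ^ q ^ 2 - ε) ^ q, (2 * ε ^ q - ε) ^ q ^ 2;
                  2 * ε ^ q - ε, (2 * ε - ε ^ q - ε ^ q ^ 2) ^ q, (2 * ε ^ q ^ 2 - ε) ^ q ^ 2;
                  2 * ε ^ q ^ 2 - ε, (2 * ε ^ q - ε) ^ q, (2 * ε - ε ^ q - ε ^ q ^ 2) ^ q ^ 2] ≠ 0 := by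
  obtain ⟨p, n, hp, hn, hq⟩ := hpp
  -- identify the characteristic with `p`
  haveI := ringChar.charP L
  obtain ⟨m, hrp, hm⟩ := FiniteField.card L (ringChar L)
  have hcard : ringChar L ^ (m : ℕ) = p ^ (3 * n) := by
    rw [← hm, hL, hq, ← pow_mul, mul_comm]
  have hrc : ringChar L = p :=
    (Nat.prime_dvd_prime_iff_eq hrp hp).mp
      (hrp.dvd_of_dvd_pow (hcard ▸ dvd_pow_self (ringChar L) m.ne_zero))
  haveI hcp : CharP L p := hrc ▸ ringChar.charP L
  haveI : Fact p.Prime := ⟨hp⟩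
  -- p is odd, so 2 ≠ 0
  have hpodd : p ≠ 2 := by
    rintro rfl
    have : Odd ((2 : ℕ) ^ n) := hq ▸ hodd
    exact (Nat.not_odd_iff_even.mpr ((Nat.even_pow).mpr ⟨even_two, hn.ne'⟩)) this
  have h2 : (2 : L) ≠ 0 := Ring.two_ne_zero (hrc ▸ hpodd)
  -- the Frobenius x ↦ x ^ q as a ring hom
  set f : L →+* L := iterateFrobenius L p n with hf
  have hfx : ∀ x : L, f x = x ^ q := fun x => by
    rw [hf, iterateFrobenius_def, ← hq]
  have hsub : ∀ x y : L, (x - y) ^ q = x ^ q - y ^ q := fun x y => by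
    rw [← hfx, ← hfx, ← hfx, map_sub]
  have h2m : ∀ x : L, (2 * x) ^ q = 2 * x ^ q := fun x => by
    rw [← hfx, ← hfx, map_mul, map_ofNat]
  -- basic power identities
  have hq3 : ∀ x : L, x ^ q ^ 3 = x := fun x => by
    rw [← hL, FiniteField.pow_card]
  have hsq : ∀ x : L, x ^ q ^ 2 = (x ^ q) ^ q := fun x => by
    rw [← pow_mul, sq]
  have hBq : (ε ^ q) ^ q = ε ^ q ^ 2 := (hsq ε).symm
  have hCq : (ε ^ q ^ 2) ^ q = ε := by
    rw [← pow_mul, ← pow_succ]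
    exact hq3 ε
  set a := ε
  set b := ε ^ q with hb
  set c := ε ^ q ^ 2 with hc
  -- rewrite all matrix entries in terms of a, b, c
  have e1 : (2 * c - a) ^ q = 2 * a - b := by rw [hsub, h2m, hCq, ← hb]
  have e2 : (2 * b - a) ^ q ^ 2 = 2 * a - c := by
    rw [hsq, hsub, h2m, hBq, ← hb, hsub, h2m, hCq, hBq]
  have e3 : (2 * a - b - c) ^ q = 2 * b - c - a := by
    rw [hsub, hsub, h2m, ← hb, hBq, hCq]
  have e4 : (2 * c - a) ^ q ^ 2 = 2 * b - c := by
    rw [hsq, e1, hsub, h2m, hBq, ← hb]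
  have e5 : (2 * b - a) ^ q = 2 * c - b := by rw [hsub, h2m, hBq, ← hb]
  have e6 : (2 * a - b - c) ^ q ^ 2 = 2 * c - a - b := by
    rw [hsq, e3, hsub, hsub, h2m, hBq, hCq, ← hb]
  have hdet : Matrix.det !![2 * a - b - c, (2 * c - a) ^ q, (2 * b - a) ^ q ^ 2;
                  2 * b - a, (2 * a - b - c) ^ q, (2 * c - a) ^ q ^ 2;
                  2 * c - a, (2 * b - a) ^ q, (2 * a - b - c) ^ q ^ 2]
      = 2 * (c - b + a) * (c + b - a) * (-c + b + a) := by
    rw [e1, e2, e3, e4, e5, e6, Matrix.det_fin_three]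
    simp [Matrix.cons_val', Matrix.cons_val_zero, Matrix.cons_val_one, Matrix.head_cons,
      Matrix.empty_val', Matrix.cons_val_fin_one, Matrix.head_fin_const,
      Matrix.cons_val_two, Matrix.tail_cons]
    ring
  refine ⟨hdet, hdet ▸ ?_⟩
  -- nonvanishing of each factor
  have h1 : c - b + a ≠ 0 := by
    intro h
    have h' : a - c + b = 0 := by
      have := congrArg f h
      rw [map_add, map_sub, map_zero, hfx, hfx, hfx, ← hb, hBq, hCq] at this
      linear_combination this
    have h2a : (2 : L) * a = 0 := by linear_combination h + h'
    exact hε ((mul_eq_zero.mp h2a).resolve_left h2)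
  have hεc : c ≠ 0 := pow_ne_zero _ hε
  have hεb : b ≠ 0 := pow_ne_zero _ hε
  have h2f : c + b - a ≠ 0 := by
    intro h
    have h' : a + c - b = 0 := by
      have := congrArg f h
      rw [map_sub, map_add, map_zero, hfx, hfx, hfx, ← hb, hBq, hCq] at this
      linear_combination this
    have h2a : (2 : L) * c = 0 := by linear_combination h + h'
    exact hεc ((mul_eq_zero.mp h2a).resolve_left h2)
  have h3 : -c + b + a ≠ 0 := by
    intro h
    have h' : -a + c + b = 0 := by
      have := congrArg f h
      rw [map_add, map_add, map_neg, map_zero, hfx, hfx, hfx, ← hb, hBq, hCq] at this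
      linear_combination this
    have h2a : (2 : L) * b = 0 := by linear_combination h + h'
    exact hεb ((mul_eq_zero.mp h2a).resolve_left h2)
  exact mul_ne_zero (mul_ne_zero (mul_ne_zero h2 h1) h2f) h3
end

section
/- Let q be an odd prime power and C, D, E ∈ F_q with C³ + D³ + E³ - 3CDE = 1/2. Then the trinomial f(X) = EX² + CX^{2q} + DX^{2q²} is planar on F_{q³}. -/
/-!
With `σ` the `q`-Frobenius of `F_{q³}` and `c, d, e` the images of `C, D, E`, the trinomial is
`f x = T (x²)` for the `σ`-linearized map `T z = e z + c σ z + d σ² z`. Hence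
`f (x + ε) - f x = T (2 ε x + ε²)`, which is injective in `x` once `T` is. Applying `σ` and `σ²`
to `T z = 0` gives a circulant linear system in `(z, σ z, σ² z)` whose determinant is
`c³ + d³ + e³ - 3 c d e = 1/2`, so `z = 0`.
-/

open Function

section Circulant

variable {R : Type*} [CommRing R]

def circulantHom (σ : R →+* R) (c d e : R) : R →+ R :=
  AddMonoidHom.mulLeft e + (AddMonoidHom.mulLeft c).comp σ.toAddMonoidHom
    + (AddMonoidHom.mulLeft d).comp (σ.comp σ).toAddMonoidHom

@[simp]
theorem circulantHom_apply (σ : R →+* R) (c d e z : R) :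
    circulantHom σ c d e z = e * z + c * σ z + d * σ (σ z) :=
  rfl

theorem circulantHom_injective {σ : R →+* R} (hσ : ∀ z, σ (σ (σ z)) = z) {c d e : R}
    (hc : σ c = c) (hd : σ d = d) (he : σ e = e)
    (hdet : IsUnit (c ^ 3 + d ^ 3 + e ^ 3 - 3 * c * d * e)) :
    Injective (circulantHom σ c d e) := by
  refine (injective_iff_map_eq_zero _).mpr fun z hz => ?_
  rw [circulantHom_apply] at hz
  have hz₁ : d * z + e * σ z + c * σ (σ z) = 0 := by
    have := congrArg σ hz
    simp only [map_add, map_mul, map_zero, hc, hd, he, hσ] at this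
    linear_combination this
  have hz₂ : c * z + d * σ z + e * σ (σ z) = 0 := by
    have := congrArg σ hz₁
    simp only [map_add, map_mul, map_zero, hc, hd, he, hσ] at this
    linear_combination this
  -- the coefficients are the cofactors of the circulant matrix
  have hdet_z : (c ^ 3 + d ^ 3 + e ^ 3 - 3 * c * d * e) * z = 0 := by
    linear_combination (e ^ 2 - c * d) * hz + (d ^ 2 - c * e) * hz₁ + (c ^ 2 - d * e) * hz₂
  exact hdet.mul_right_eq_zero.mp hdet_z

end Circulant

theorem injective_map_add_sq_sub_map_sq {F : Type*} [Field F] (h2 : (2 : F) ≠ 0)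
    {T : F →+ F} (hT : Injective T) {ε : F} (hε : ε ≠ 0) :
    Injective fun x => T ((x + ε) ^ 2) - T (x ^ 2) := by
  intro x y hxy
  simp only [← map_sub] at hxy
  have h := hT hxy
  have hcancel : 2 * ε * x = 2 * ε * y := by linear_combination h
  exact mul_left_cancel₀ (mul_ne_zero h2 hε) hcancel

theorem two_ne_zero_of_odd_card {F : Type*} [Field F] [Fintype F] (hodd : Odd (Fintype.card F)) :
    (2 : F) ≠ 0 :=
  Ring.two_ne_zero fun hchar => by
    simp [FiniteField.even_card_iff_char_two.mp hchar, Nat.odd_iff] at hodd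

theorem frobeniusAlgHom_iterate_three {K L : Type*} [Field K] [Fintype K] [Field L] [Fintype L]
    [Algebra K L] (hL : Fintype.card L = Fintype.card K ^ 3) (z : L) :
    FiniteField.frobeniusAlgHom K L (FiniteField.frobeniusAlgHom K L
      (FiniteField.frobeniusAlgHom K L z)) = z := by
  simp only [FiniteField.coe_frobeniusAlgHom, ← pow_mul]
  rw [show Fintype.card K * Fintype.card K * Fintype.card K = Fintype.card K ^ 3 by ring, ← hL,
    FiniteField.pow_card]

theorem stmt6_general (q : ℕ) (hodd : Odd q)
    (K L : Type) [Field K] [Field L] [Fintype K] [Fintype L] [Algebra K L]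
    (hK : Fintype.card K = q) (hL : Fintype.card L = q ^ 3)
    (C D E : K) (h : C ^ 3 + D ^ 3 + E ^ 3 - 3 * C * D * E = 1 / 2) (f : L → L)
    (hf : ∀ x : L, f x = algebraMap K L E * x ^ 2 + algebraMap K L C * x ^ (2 * q)
        + algebraMap K L D * x ^ (2 * q ^ 2)) :
    ∀ ε : L, ε ≠ 0 → Function.Bijective (fun x : L => f (x + ε) - f x) := by
  intro ε hε
  subst hK
  set φ := FiniteField.frobeniusAlgHom K L
  have h2K : (2 : K) ≠ 0 := two_ne_zero_of_odd_card hodd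
  have h2L : (2 : L) ≠ 0 := by
    simpa only [map_ofNat] using (map_ne_zero (algebraMap K L)).mpr h2K
  have hdetK : C ^ 3 + D ^ 3 + E ^ 3 - 3 * C * D * E ≠ 0 := h ▸ one_div_ne_zero h2K
  have hdet : IsUnit ((algebraMap K L C) ^ 3 + (algebraMap K L D) ^ 3 + (algebraMap K L E) ^ 3
      - 3 * algebraMap K L C * algebraMap K L D * algebraMap K L E) := by
    simpa only [map_sub, map_add, map_mul, map_pow, map_ofNat] using
      hdetK.isUnit.map (algebraMap K L)
  have hfT : f = fun x => circulantHom (φ : L →+* L) (algebraMap K L C) (algebraMap K L D)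
      (algebraMap K L E) (x ^ 2) := by
    funext x
    simp only [hf, circulantHom_apply, φ, RingHom.coe_coe, FiniteField.coe_frobeniusAlgHom,
      ← pow_mul]
    ring_nf
  have hT := circulantHom_injective (frobeniusAlgHom_iterate_three hL)
    (φ.commutes C) (φ.commutes D) (φ.commutes E) hdet
  rw [← Finite.injective_iff_bijective, hfT]
  exact injective_map_add_sq_sub_map_sq h2L hT hε

theorem stmt6 (q : ℕ) (hodd : Odd q) (hpp : ∃ p n : ℕ, Nat.Prime p ∧ 0 < n ∧ q = p ^ n)
    (K L : Type) [Field K] [Field L] [Fintype K] [Fintype L] [Algebra K L]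
    (hK : Fintype.card K = q) (hL : Fintype.card L = q ^ 3)
    (C D E : K) (h : C ^ 3 + D ^ 3 + E ^ 3 - 3 * C * D * E = 1 / 2) (f : L → L)
    (hf : ∀ x : L, f x = algebraMap K L E * x ^ 2 + algebraMap K L C * x ^ (2 * q)
        + algebraMap K L D * x ^ (2 * q ^ 2)) :
    ∀ ε : L, ε ≠ 0 → Function.Bijective (fun x : L => f (x + ε) - f x) :=
  stmt6_general q hodd K L hK hL C D E h f hf
end

section
/- Let q be an odd prime power. The quadrinomial f(X) = -X² + 2X^{q²+1} + X^{2q} - X^{2q²} is planar on F_{q³}. -/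
theorem stmt7 (q : ℕ) (hodd : Odd q) (hpp : ∃ p n : ℕ, Nat.Prime p ∧ 0 < n ∧ q = p ^ n)
    (L : Type) [Field L] [Fintype L] (hL : Fintype.card L = q ^ 3)
    (f : L → L)
    (hf : ∀ x : L, f x = -x ^ 2 + 2 * (x ^ q ^ 2 * x) + x ^ (2 * q) - x ^ (2 * q ^ 2)) :
    ∀ ε : L, ε ≠ 0 → Function.Bijective (fun x : L => f (x + ε) - f x) := by
  obtain ⟨p, n, hp, hn, hq⟩ := hpp
  -- the characteristic of L is p
  haveI hrC : CharP L (ringChar L) := ringChar.charP L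
  have hrp : (ringChar L).Prime := CharP.char_is_prime L (ringChar L)
  obtain ⟨m, _, hcard⟩ := FiniteField.card L (ringChar L)
  have hrL : ringChar L = p := by
    have h1 : ringChar L ∣ p ^ (n * 3) := by
      have h2 : (ringChar L) ^ (m : ℕ) = p ^ (n * 3) := by
        rw [← hcard, hL, hq, ← pow_mul]
      exact h2 ▸ dvd_pow_self (ringChar L) (by positivity)
    exact (Nat.prime_dvd_prime_iff_eq hrp hp).mp (hrp.dvd_of_dvd_pow h1)
  haveI : CharP L p := hrL ▸ hrC
  haveI : Fact p.Prime := ⟨hp⟩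
  -- p is odd, hence 2 ≠ 0 in L
  have hpodd : Odd p := by
    by_contra h
    have he : Even p := Nat.not_odd_iff_even.mp h
    have : Even q := by
      rw [hq, Nat.even_pow]
      exact ⟨he, by omega⟩
    exact Nat.not_even_iff_odd.mpr hodd this
  have htwo : (2 : L) ≠ 0 := by
    intro h
    have h2 : p ∣ 2 := (CharP.cast_eq_zero_iff L p 2).mp (by exact_mod_cast h)
    have : p = 2 := (Nat.prime_dvd_prime_iff_eq hp Nat.prime_two).mp h2
    rw [this] at hpodd
    exact (Nat.not_even_iff_odd.mpr hpodd) even_two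
  -- Frobenius additivity
  have hq1 : ∀ a b : L, (a + b) ^ q = a ^ q + b ^ q := by
    intro a b; rw [hq]; exact add_pow_char_pow a b p n
  have hq2 : ∀ a b : L, (a + b) ^ q ^ 2 = a ^ q ^ 2 + b ^ q ^ 2 := by
    intro a b
    have hqe : q ^ 2 = p ^ (n * 2) := by rw [hq, ← pow_mul]
    rw [hqe]; exact add_pow_char_pow a b p (n * 2)
  have hneg2 : ∀ a : L, (-a) ^ q ^ 2 = -(a ^ q ^ 2) := fun a =>
    Odd.neg_pow (hodd.pow) a
  have hsub2 : ∀ a b : L, (a - b) ^ q ^ 2 = a ^ q ^ 2 - b ^ q ^ 2 := by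
    intro a b
    rw [sub_eq_add_neg, hq2, hneg2, sub_eq_add_neg]
  have hneg1 : ∀ a : L, (-a) ^ q = -(a ^ q) := fun a => Odd.neg_pow hodd a
  have hsub1 : ∀ a b : L, (a - b) ^ q = a ^ q - b ^ q := by
    intro a b
    rw [sub_eq_add_neg, hq1, hneg1, sub_eq_add_neg]
  -- power identities
  have hq3 : ∀ a : L, a ^ q ^ 3 = a := by
    intro a; rw [← hL]; exact FiniteField.pow_card a
  have hqq : ∀ a : L, (a ^ q) ^ q = a ^ q ^ 2 := by
    intro a; rw [← pow_mul, ← pow_two]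
  have hq2q : ∀ a : L, (a ^ q ^ 2) ^ q = a := by
    intro a
    rw [← pow_mul]
    have : q ^ 2 * q = q ^ 3 := by ring
    rw [this, hq3]
  have hqq2 : ∀ a : L, (a ^ q) ^ q ^ 2 = a := by
    intro a
    rw [← pow_mul]
    have : q * q ^ 2 = q ^ 3 := by ring
    rw [this, hq3]
  have hq2q2 : ∀ a : L, (a ^ q ^ 2) ^ q ^ 2 = a ^ q := by
    intro a
    rw [← pow_mul]
    have : q ^ 2 * q ^ 2 = q ^ 3 * q := by ring
    rw [this, pow_mul, hq3]
  -- 2^q = 2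
  have htwopow : (2 : L) ^ q = 2 := by
    have h2 : (2 : L) = 1 + 1 := by norm_num
    rw [h2, hq1, one_pow]
  -- injectivity of A x = x^q + x^{q²} - x
  have hAinj : ∀ x : L, x ^ q + x ^ q ^ 2 - x = 0 → x = 0 := by
    intro x hx
    have h1 : x ^ q + x ^ q ^ 2 = x := by rwa [sub_eq_zero] at hx
    have h2 : (2 * x) ^ q = 2 * x ^ q := by rw [mul_pow, htwopow]
    have h3 : 2 * x = x + (x ^ q + x ^ q ^ 2) := by rw [h1]; ring
    have h4 : (2 * x) ^ q = x ^ q + (x ^ q ^ 2 + x) := by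
      rw [h3, hq1, hq1, hqq, hq2q]
    have h5 : 2 * x ^ q = 2 * x := by
      rw [h2] at h4
      have hxq2 : x ^ q ^ 2 = x - x ^ q := by linear_combination h1
      rw [hxq2] at h4
      linear_combination h4
    have h6 : x ^ q = x := mul_left_cancel₀ htwo h5
    have h7 : x ^ q ^ 2 = x := by rw [← hqq, h6, h6]
    rw [h6, h7] at h1
    linear_combination h1
  -- main part
  intro ε hε
  obtain ⟨δ, hδdef⟩ : ∃ d : L, d = ε ^ q + ε ^ q ^ 2 - ε := ⟨_, rfl⟩
  have hδ : δ ≠ 0 := by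
    intro h
    rw [hδdef] at h
    exact hε (hAinj ε h)
  have hδ2 : δ ^ q ^ 2 ≠ 0 := pow_ne_zero _ hδ
  have hB : ∀ x : L, (x ^ q + x ^ q ^ 2 - x) ^ q ^ 2 = x + x ^ q - x ^ q ^ 2 := by
    intro x
    rw [hsub2, hq2, hqq2, hq2q2]
  have hδB : δ ^ q ^ 2 = ε + ε ^ q - ε ^ q ^ 2 := by rw [hδdef]; exact hB ε
  have hfA : ∀ x : L, f x = (x ^ q + x ^ q ^ 2 - x) * (x + x ^ q - x ^ q ^ 2) := by
    intro x; rw [hf]; ring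
  have key : ∀ x : L, f (x + ε) - f x =
      δ ^ q ^ 2 * (x ^ q + x ^ q ^ 2 - x) + δ * (x + x ^ q - x ^ q ^ 2) + δ * δ ^ q ^ 2 := by
    intro x
    rw [hfA, hfA, hδB, hδdef, hq1, hq2]
    ring
  -- kernel of the linearized difference map is trivial
  have hker : ∀ z : L, δ ^ q ^ 2 * z + δ * z ^ q ^ 2 = 0 → z = 0 := by
    intro z hz
    by_contra hz0
    obtain ⟨u, hu⟩ : ∃ u : L, u = z * δ⁻¹ := ⟨_, rfl⟩
    have hu0 : u ≠ 0 := by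
      rw [hu]
      exact mul_ne_zero hz0 (inv_ne_zero hδ)
    have hzu : z = u * δ := by rw [hu, inv_mul_cancel_right₀ hδ]
    have hu1 : u ^ q ^ 2 = -u := by
      rw [hzu, mul_pow] at hz
      have h' : δ * δ ^ q ^ 2 * (u ^ q ^ 2 + u) = 0 := by linear_combination hz
      rcases mul_eq_zero.mp h' with h | h
      · exact absurd h (mul_ne_zero hδ hδ2)
      · linear_combination h
    have hu2 : u ^ q = u := by
      have := hq2q2 u
      rw [hu1, hneg2, hu1, neg_neg] at this
      exact this.symm
    have hu3 : u ^ q ^ 2 = u := by rw [← hqq, hu2, hu2]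
    rw [hu3] at hu1
    have : (2 : L) * u = 0 := by linear_combination hu1
    rcases mul_eq_zero.mp this with h | h
    · exact htwo h
    · exact hu0 h
  refine Finite.injective_iff_bijective.mp ?_
  intro x₁ x₂ hx
  replace hx : f (x₁ + ε) - f x₁ = f (x₂ + ε) - f x₂ := hx
  rw [key x₁, key x₂] at hx
  have hz0 : δ ^ q ^ 2 * ((x₁ - x₂) ^ q + (x₁ - x₂) ^ q ^ 2 - (x₁ - x₂)) +
      δ * (((x₁ - x₂) ^ q + (x₁ - x₂) ^ q ^ 2 - (x₁ - x₂)) ^ q ^ 2) = 0 := by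
    rw [hB (x₁ - x₂), hsub1, hsub2]
    linear_combination hx
  exact sub_eq_zero.mp (hAinj _ (hker _ hz0))
end

section
/- Let q be an odd prime power and D, E ∈ F_q. The pentanomial f(X) = EX² + 2(E-D)X^{q+1} + 2DX^{q²+1} + (E-D)X^{2q} + DX^{2q²} is planar on F_{q³} if and only if E(3D² - 3DE + E²) ≠ 0. -/
theorem stmt8 (q : ℕ) (hodd : Odd q) (hpp : ∃ p n : ℕ, Nat.Prime p ∧ 0 < n ∧ q = p ^ n)
    (K L : Type) [Field K] [Field L] [Fintype K] [Fintype L] [Algebra K L]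
    (hK : Fintype.card K = q) (hL : Fintype.card L = q ^ 3)
    (D E : K) (f : L → L)
    (hf : ∀ x : L, f x = algebraMap K L E * x ^ 2
        + algebraMap K L (2 * (E - D)) * (x ^ q * x)
        + algebraMap K L (2 * D) * (x ^ q ^ 2 * x)
        + algebraMap K L (E - D) * x ^ (2 * q)
        + algebraMap K L D * x ^ (2 * q ^ 2)) :
    (∀ ε : L, ε ≠ 0 → Function.Bijective (fun x : L => f (x + ε) - f x)) ↔
      E * (3 * D ^ 2 - 3 * D * E + E ^ 2) ≠ 0 := by
  obtain ⟨p, n, hp, hn, hqpn⟩ := hpp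
  haveI : Fact p.Prime := ⟨hp⟩
  have hq1 : 1 ≤ q := hqpn ▸ Nat.one_le_pow _ _ hp.pos
  have hq0 : q ≠ 0 := by omega
  -- characteristic of L is p
  have hqL0 : ((q : ℕ) : L) = 0 := by
    have h0 : (((q ^ 3 : ℕ)) : L) = 0 := by rw [← hL]; exact FiniteField.cast_card_eq_zero L
    rw [Nat.cast_pow] at h0
    exact pow_eq_zero_iff (by norm_num) |>.mp h0
  have hpL : ((p : ℕ) : L) = 0 := by
    have h1 : (((p : ℕ) : L)) ^ n = 0 := by rw [← Nat.cast_pow, ← hqpn]; exact hqL0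
    exact pow_eq_zero_iff hn.ne' |>.mp h1
  haveI hcharL : CharP L p := by
    have hd : ringChar L ∣ p := ringChar.dvd hpL
    have hne1 : ringChar L ≠ 1 := CharP.char_ne_one L (ringChar L)
    rcases hp.eq_one_or_self_of_dvd _ hd with h | h
    · exact absurd h hne1
    · exact h ▸ ringChar.charP L
  have hp2 : p ≠ 2 := by
    rintro rfl
    exact (Nat.not_even_iff_odd.mpr hodd) (hqpn ▸ (Nat.even_pow.mpr ⟨even_two, hn.ne'⟩))
  have h2L : (2 : L) ≠ 0 := by
    intro h
    have h2 : (((2:ℕ) : L)) = 0 := by exact_mod_cast h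
    have := (CharP.cast_eq_zero_iff L p 2).mp h2
    exact hp2 ((Nat.prime_dvd_prime_iff_eq hp Nat.prime_two).mp this)
  -- Frobenius facts
  have frob : ∀ a b : L, (a + b) ^ q = a ^ q + b ^ q := fun a b => by
    rw [hqpn]; exact add_pow_char_pow a b p n
  have negq : ∀ a : L, (-a) ^ q = -(a ^ q) := fun a => Odd.neg_pow hodd a
  have frobsub : ∀ a b : L, (a - b) ^ q = a ^ q - b ^ q := fun a b => by
    rw [sub_eq_add_neg, frob, negq, ← sub_eq_add_neg]
  have hsq : ∀ a : L, a ^ q ^ 2 = (a ^ q) ^ q := fun a => by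
    rw [show q ^ 2 = q * q by ring, pow_mul]
  have frobL3 : ∀ a : L, (a ^ q ^ 2) ^ q = a := fun a => by
    rw [← pow_mul, show q ^ 2 * q = q ^ 3 by ring, ← hL]
    exact FiniteField.pow_card a
  have fixK : ∀ c : K, (algebraMap K L c) ^ q = algebraMap K L c := fun c => by
    rw [← map_pow]; congr 1; rw [← hK]; exact FiniteField.pow_card c
  set b : L := algebraMap K L (E - D) with hbdef
  set d : L := algebraMap K L D with hddef
  have hbq : b ^ q = b := by rw [hbdef]; exact fixK _
  have hdq : d ^ q = d := by rw [hddef]; exact fixK _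
  have hE : algebraMap K L E = b + d := by
    rw [hbdef, hddef, ← map_add]; congr 1; ring
  have hf2 : ∀ x : L, f x = (b + d) * x ^ 2 + 2 * b * (x ^ q * x)
      + 2 * d * (x ^ q ^ 2 * x) + b * x ^ (2 * q) + d * x ^ (2 * q ^ 2) := by
    intro x
    rw [hf, map_mul, map_mul, map_ofNat, hE, ← hbdef, ← hddef]
  have hzero : f 0 = 0 := by
    rw [hf2]
    have e1 : (0 : L) ^ q = 0 := zero_pow hq0
    have e2 : (0 : L) ^ q ^ 2 = 0 := zero_pow (by positivity)
    have e3 : (0 : L) ^ (2 * q) = 0 := zero_pow (by positivity)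
    have e4 : (0 : L) ^ (2 * q ^ 2) = 0 := zero_pow (by positivity)
    rw [e1, e2, e3, e4]; ring
  have e2q : ∀ a : L, a ^ (2 * q) = (a ^ q) ^ 2 := fun a => by rw [mul_comm, pow_mul]
  have e2q2 : ∀ a : L, a ^ (2 * q ^ 2) = (a ^ q ^ 2) ^ 2 := fun a => by rw [mul_comm, pow_mul]
  -- the key linearization identity
  have key : ∀ ε x : L, f (x + ε) - f x - f ε =
      2 * (((b + d) * ε + b * ε ^ q + d * ε ^ q ^ 2) * x
        + b * (ε + ε ^ q) * x ^ q + d * (ε + ε ^ q ^ 2) * x ^ q ^ 2) := by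
    intro ε x
    have h1 : (x + ε) ^ q = x ^ q + ε ^ q := frob x ε
    have h2 : (x + ε) ^ q ^ 2 = x ^ q ^ 2 + ε ^ q ^ 2 := by
      rw [hsq, h1, frob, ← hsq, ← hsq]
    rw [hf2 (x + ε), hf2 x, hf2 ε]
    simp only [e2q, e2q2, h1, h2]
    ring
  -- main reduction: planarity ↔ trivial kernels
  have main : (∀ ε : L, ε ≠ 0 → Function.Bijective (fun x : L => f (x + ε) - f x)) ↔
      (∀ ε : L, ε ≠ 0 → ∀ x : L,
        ((b + d) * ε + b * ε ^ q + d * ε ^ q ^ 2) * x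
          + b * (ε + ε ^ q) * x ^ q + d * (ε + ε ^ q ^ 2) * x ^ q ^ 2 = 0 → x = 0) := by
    constructor
    · intro hbij ε hε x hx
      have h0 : f (x + ε) - f x = f (0 + ε) - f 0 := by
        rw [zero_add, hzero, sub_zero]
        have hk := key ε x
        rw [hx, mul_zero] at hk
        linear_combination hk
      exact (hbij ε hε).injective h0
    · intro hker ε hε
      refine Finite.injective_iff_bijective.mp ?_
      intro a c hac
      have hac' : f (a + ε) - f a = f (c + ε) - f c := hac
      have hsub2 : ∀ s t : L, (s - t) ^ q ^ 2 = s ^ q ^ 2 - t ^ q ^ 2 := fun s t => by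
        rw [hsq, frobsub, frobsub, ← hsq, ← hsq]
      have k1 := key ε a
      have k2 := key ε c
      have hP2 : 2 * (((b + d) * ε + b * ε ^ q + d * ε ^ q ^ 2) * a
          + b * (ε + ε ^ q) * a ^ q + d * (ε + ε ^ q ^ 2) * a ^ q ^ 2)
        = 2 * (((b + d) * ε + b * ε ^ q + d * ε ^ q ^ 2) * c
          + b * (ε + ε ^ q) * c ^ q + d * (ε + ε ^ q ^ 2) * c ^ q ^ 2) := by
        linear_combination hac' - k1 + k2
      have hPP := mul_left_cancel₀ h2L hP2
      have hPac : ((b + d) * ε + b * ε ^ q + d * ε ^ q ^ 2) * (a - c)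
          + b * (ε + ε ^ q) * (a - c) ^ q + d * (ε + ε ^ q ^ 2) * (a - c) ^ q ^ 2 = 0 := by
        rw [frobsub, hsub2]
        linear_combination hPP
      have := hker ε hε (a - c) hPac
      exact sub_eq_zero.mp this
  rw [main]
  constructor
  · -- trivial kernels → condition
    intro hker
    by_contra hC
    by_cases hE0 : E = 0
    · -- degenerate case E = 0 : witness ε = 1, x = 1
      have hbd : b + d = 0 := by
        rw [hbdef, hddef, ← map_add]
        have : E - D + D = 0 := by rw [hE0]; ring
        rw [this, map_zero]
      have h11 := hker 1 one_ne_zero 1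
      refine one_ne_zero (h11 ?_)
      simp only [one_pow, mul_one]
      linear_combination 4 * hbd
    · have hquad : 3 * D ^ 2 - 3 * D * E + E ^ 2 = 0 := by
        rcases mul_eq_zero.mp hC with h | h
        · exact absurd h hE0
        · exact h
      have hD0 : D ≠ 0 := by
        intro h
        apply hE0
        have hE2 : E ^ 2 = 0 := by rw [h] at hquad; linear_combination hquad
        exact pow_eq_zero_iff (two_ne_zero) |>.mp hE2
      have hDE : D - E ≠ 0 := by
        intro h
        apply hE0
        have hde : D = E := sub_eq_zero.mp h
        have hE2 : E ^ 2 = 0 := by rw [hde] at hquad; linear_combination hquad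
        exact pow_eq_zero_iff (two_ne_zero) |>.mp hE2
      set ω : K := (D - E) / D with hωdef
      have hω0 : ω ≠ 0 := div_ne_zero hDE hD0
      have h3 : (D - E) ^ 3 = D ^ 3 := by linear_combination (-E) * hquad
      have hω3 : ω ^ 3 = 1 := by
        rw [hωdef, div_pow, div_eq_one_iff_eq (pow_ne_zero 3 hD0)]
        exact h3
      have hω1 : ω ≠ 1 := by
        intro h
        apply hE0
        rw [hωdef, div_eq_one_iff_eq hD0] at h
        linear_combination -h
      -- 3 divides q - 1
      have hωu3 : (Units.mk0 ω hω0) ^ 3 = 1 := by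
        ext
        simp [hω3]
      have hordω : orderOf (Units.mk0 ω hω0) = 3 := by
        have h1 := orderOf_dvd_of_pow_eq_one hωu3
        rcases (Nat.dvd_prime Nat.prime_three).mp h1 with h | h
        · exfalso
          rw [orderOf_eq_one_iff] at h
          exact hω1 (by simpa [Units.ext_iff] using h)
        · exact h
      have hdvd3 : 3 ∣ q - 1 := by
        have h2 : orderOf (Units.mk0 ω hω0) ∣ Nat.card Kˣ := orderOf_dvd_natCard _
        rwa [hordω, Nat.card_units, Nat.card_eq_fintype_card, hK] at h2
      obtain ⟨m, hm⟩ : ∃ m, q = 3 * m + 1 := by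
        obtain ⟨c, hc⟩ := hdvd3
        exact ⟨c, by omega⟩
      have hdvd3' : 3 ∣ q ^ 2 + q + 1 := ⟨3 * m ^ 2 + 3 * m + 1, by subst hm; ring⟩
      -- eigenvector for ω²
      have hμ0 : algebraMap K L (ω ^ 2) ≠ 0 := by
        intro h
        apply pow_ne_zero 2 hω0
        exact (RingHom.injective (algebraMap K L)) (by rw [h, map_zero])
      have hν3 : (Units.mk0 _ hμ0) ^ 3 = 1 := by
        ext
        have : (ω ^ 2) ^ 3 = 1 := by rw [show (ω ^ 2) ^ 3 = (ω ^ 3) ^ 2 by ring, hω3, one_pow]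
        simp [← map_pow, this]
      have hνs : (Units.mk0 _ hμ0) ^ (q ^ 2 + q + 1) = 1 := by
        obtain ⟨s, hs⟩ := hdvd3'
        rw [hs, pow_mul, hν3, one_pow]
      obtain ⟨g, hg⟩ := IsCyclic.exists_generator (α := Lˣ)
      obtain ⟨k, hk0⟩ := mem_powers_iff_mem_zpowers.mpr (hg (Units.mk0 _ hμ0))
      have hk : g ^ k = Units.mk0 _ hμ0 := hk0
      have horder : orderOf g = q ^ 3 - 1 := by
        rw [orderOf_eq_card_of_forall_mem_zpowers hg, Nat.card_units,
          Nat.card_eq_fintype_card, hL]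
      have hfact : q ^ 3 - 1 = (q - 1) * (q ^ 2 + q + 1) := by
        have h2 : 1 ≤ q ^ 3 := Nat.one_le_pow _ _ (by omega)
        zify [hq1, h2]; ring
      have hdvdk : (q - 1) * (q ^ 2 + q + 1) ∣ k * (q ^ 2 + q + 1) := by
        have hone : g ^ (k * (q ^ 2 + q + 1)) = 1 := by rw [pow_mul, hk, hνs]
        have h := orderOf_dvd_of_pow_eq_one hone
        rwa [horder, hfact] at h
      have hdvdk' : (q - 1) ∣ k :=
        (Nat.mul_dvd_mul_iff_right (show 0 < q ^ 2 + q + 1 by positivity)).mp hdvdk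
      obtain ⟨j, hj⟩ := hdvdk'
      have hx₀0 : ((g ^ j : Lˣ) : L) ≠ 0 := Units.ne_zero _
      have hx₀pow : ((g ^ j : Lˣ) : L) ^ (q - 1) = algebraMap K L (ω ^ 2) := by
        have hu : (g ^ j) ^ (q - 1) = Units.mk0 _ hμ0 := by
          have hjk : j * (q - 1) = k := by rw [hj, Nat.mul_comm]
          rw [← pow_mul, hjk, hk]
        calc ((g ^ j : Lˣ) : L) ^ (q - 1) = (((g ^ j) ^ (q - 1) : Lˣ) : L) :=
              (Units.val_pow_eq_pow_val _ _).symm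
          _ = algebraMap K L (ω ^ 2) := by rw [hu]; rfl
      have hxq : ((g ^ j : Lˣ) : L) ^ q = algebraMap K L (ω ^ 2) * ((g ^ j : Lˣ) : L) := by
        conv_lhs => rw [show q = (q - 1) + 1 by omega]
        rw [pow_succ, hx₀pow, mul_comm]
      have hxq2 : ((g ^ j : Lˣ) : L) ^ q ^ 2 = algebraMap K L ω * ((g ^ j : Lˣ) : L) := by
        rw [hsq, hxq, mul_pow, hxq, fixK, ← mul_assoc, ← map_mul]
        congr 1
        rw [show ω ^ 2 * ω ^ 2 = ω ^ 3 * ω by ring, hω3, one_mul]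
      have hcoef : E + (E - D) * ω ^ 2 + D * ω = 0 := by
        rw [hωdef]
        field_simp
        linear_combination E * hquad
      have hzero2 : (b + d) + b * algebraMap K L (ω ^ 2) + d * algebraMap K L ω = 0 := by
        have hc := congrArg (algebraMap K L) hcoef
        rw [map_zero, map_add, map_add, map_mul, map_mul, hE, ← hbdef, ← hddef] at hc
        linear_combination hc
      have hker1 := hker 1 one_ne_zero ((g ^ j : Lˣ) : L)
      apply hx₀0
      apply hker1
      simp only [one_pow, mul_one]
      rw [hxq, hxq2]
      linear_combination (2 * ((g ^ j : Lˣ) : L)) * hzero2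
  · -- condition → trivial kernels
    intro hC ε hε x hP
    by_contra hx0
    have hvq : (ε ^ q) ^ q = ε ^ q ^ 2 := (hsq ε).symm
    have hwq : (ε ^ q ^ 2) ^ q = ε := frobL3 ε
    have hyq : (x ^ q) ^ q = x ^ q ^ 2 := (hsq x).symm
    have hzq : (x ^ q ^ 2) ^ q = x := frobL3 x
    have eq2 : ((b + d) * ε ^ q + b * ε ^ q ^ 2 + d * ε) * x ^ q
        + b * (ε ^ q + ε ^ q ^ 2) * x ^ q ^ 2 + d * (ε ^ q + ε) * x = 0 := by
      have h : (((b + d) * ε + b * ε ^ q + d * ε ^ q ^ 2) * x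
          + b * (ε + ε ^ q) * x ^ q + d * (ε + ε ^ q ^ 2) * x ^ q ^ 2) ^ q = 0 := by
        rw [hP]; exact zero_pow hq0
      simp only [frob, mul_pow, hbq, hdq, hvq, hwq, hyq, hzq] at h
      linear_combination h
    have eq3 : ((b + d) * ε ^ q ^ 2 + b * ε + d * ε ^ q) * x ^ q ^ 2
        + b * (ε ^ q ^ 2 + ε) * x + d * (ε ^ q ^ 2 + ε ^ q) * x ^ q = 0 := by
      have h : (((b + d) * ε ^ q + b * ε ^ q ^ 2 + d * ε) * x ^ q
          + b * (ε ^ q + ε ^ q ^ 2) * x ^ q ^ 2 + d * (ε ^ q + ε) * x) ^ q = 0 := by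
        rw [eq2]; exact zero_pow hq0
      simp only [frob, mul_pow, hbq, hdq, hvq, hwq, hyq, hzq] at h
      linear_combination h
    have hdet : 2 * (d ^ 3 + b ^ 3) * (ε + ε ^ q) * (ε ^ q + ε ^ q ^ 2) * (ε ^ q ^ 2 + ε) * x
        = 0 := by
      linear_combination
        ((((b + d) * ε ^ q + b * ε ^ q ^ 2 + d * ε) * ((b + d) * ε ^ q ^ 2 + b * ε + d * ε ^ q)
            - b * (ε ^ q + ε ^ q ^ 2) * (d * (ε ^ q ^ 2 + ε ^ q))) * hP)
        + ((d * (ε + ε ^ q ^ 2) * (d * (ε ^ q ^ 2 + ε ^ q))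
            - b * (ε + ε ^ q) * ((b + d) * ε ^ q ^ 2 + b * ε + d * ε ^ q)) * eq2)
        + ((b * (ε + ε ^ q) * (b * (ε ^ q + ε ^ q ^ 2))
            - d * (ε + ε ^ q ^ 2) * ((b + d) * ε ^ q + b * ε ^ q ^ 2 + d * ε)) * eq3)
    have hdet0 : 2 * (d ^ 3 + b ^ 3) * (ε + ε ^ q) * (ε ^ q + ε ^ q ^ 2) * (ε ^ q ^ 2 + ε)
        = 0 := by
      rcases mul_eq_zero.mp hdet with h | h
      · exact h
      · exact absurd h hx0
    have hsumne : ∀ t : L, t ≠ 0 → t + t ^ q ≠ 0 := by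
      intro t ht h
      have h1 : t ^ q = -t := by linear_combination h
      have h2 : t ^ q ^ 2 = t := by rw [hsq, h1, negq, h1, neg_neg]
      have h3' : -t = t := by
        have hf3 := frobL3 t
        rwa [h2, h1] at hf3
      have h4 : (2 : L) * t = 0 := by linear_combination -h3'
      rcases mul_eq_zero.mp h4 with h' | h'
      · exact h2L h'
      · exact ht h'
    have f1 : ε + ε ^ q ≠ 0 := hsumne ε hε
    have f2 : ε ^ q + ε ^ q ^ 2 ≠ 0 := by
      have := hsumne (ε ^ q) (pow_ne_zero q hε)
      rwa [hvq] at this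
    have f3 : ε ^ q ^ 2 + ε ≠ 0 := by
      have := hsumne (ε ^ q ^ 2) (pow_ne_zero _ hε)
      rwa [hwq] at this
    have fdb : d ^ 3 + b ^ 3 ≠ 0 := by
      intro h
      apply hC
      have hDb : D ^ 3 + (E - D) ^ 3 = 0 := by
        apply RingHom.injective (algebraMap K L)
        rw [map_add, map_pow, map_pow, map_zero, ← hbdef, ← hddef]
        exact h
      linear_combination hDb
    exact (mul_ne_zero (mul_ne_zero (mul_ne_zero (mul_ne_zero h2L fdb) f1) f2) f3) hdet0
end

section
/- Let q be an odd prime power. The pentanomial f(X) = X² - X^{q+1} - X^{q²+1} + X^{2q} + X^{2q²} is planar on F_{q³}. -/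
theorem stmt9 (q : ℕ) (hodd : Odd q) (hpp : ∃ p n : ℕ, Nat.Prime p ∧ 0 < n ∧ q = p ^ n)
    (L : Type) [Field L] [Fintype L] (hL : Fintype.card L = q ^ 3)
    (f : L → L)
    (hf : ∀ x : L, f x = x ^ 2 - x ^ q * x - x ^ q ^ 2 * x + x ^ (2 * q) + x ^ (2 * q ^ 2)) :
    ∀ ε : L, ε ≠ 0 → Function.Bijective (fun x : L => f (x + ε) - f x) := by
  obtain ⟨p, n, hp, hn, hq⟩ := hpp
  haveI : Fact p.Prime := ⟨hp⟩
  have hcard : Fintype.card L = p ^ (3 * n) := by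
    rw [hL, hq, ← pow_mul, mul_comm]
  haveI hchar : CharP L p := by
    haveI := ringChar.charP L
    obtain ⟨m, hrp, hcardr⟩ := FiniteField.card L (ringChar L)
    have hdvd : ringChar L ∣ p ^ (3 * n) := by
      rw [← hcard, hcardr]
      exact dvd_pow_self _ (by exact_mod_cast m.ne_zero)
    have : ringChar L = p := (Nat.prime_dvd_prime_iff_eq hrp hp).mp (hrp.dvd_of_dvd_pow hdvd)
    exact this ▸ ringChar.charP L
  haveI : ExpChar L p := ExpChar.prime hp
  have hpodd : p ≠ 2 := by
    rintro rfl
    rw [hq] at hodd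
    exact (Nat.not_odd_iff_even.mpr (Nat.even_pow.mpr ⟨even_two, hn.ne'⟩)) hodd
  have h2 : (2 : L) ≠ 0 := by
    intro h
    have : (p : ℕ) ∣ 2 := by
      have := (CharP.cast_eq_zero_iff L p 2).mp (by exact_mod_cast h)
      exact this
    exact hpodd ((Nat.prime_dvd_prime_iff_eq hp Nat.prime_two).mp this)
  set φ : L →+* L := iterateFrobenius L p n with hφdef
  have hφ : ∀ x : L, φ x = x ^ q := by
    intro x; rw [hφdef, iterateFrobenius_def, hq]
  have hφ3 : ∀ x : L, φ (φ (φ x)) = x := by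
    intro x
    rw [hφ, hφ, hφ, ← pow_mul, ← pow_mul, show q * (q * q) = q ^ 3 by ring, ← hL]
    exact FiniteField.pow_card x
  have hfφ : ∀ x : L, f x = x ^ 2 - φ x * x - φ (φ x) * x + (φ x) ^ 2 + (φ (φ x)) ^ 2 := by
    intro x
    simp only [hφ]
    rw [hf x,
      show x ^ q ^ 2 = (x ^ q) ^ q by rw [← pow_mul, pow_two],
      show x ^ (2 * q) = (x ^ q) ^ 2 by rw [← pow_mul, mul_comm],
      show x ^ (2 * q ^ 2) = ((x ^ q) ^ q) ^ 2 by
        rw [← pow_mul, ← pow_mul, mul_comm, pow_two, mul_assoc]]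
  intro ε hε
  -- the key kernel lemma
  have key : ∀ x : L,
      2 * (x * ε + φ x * φ ε + φ (φ x) * φ (φ ε)) + 2 * (x * ε)
        - x * (ε + φ ε + φ (φ ε)) - ε * (x + φ x + φ (φ x)) = 0 → x = 0 := by
    intro x hx
    have hx1 := congrArg φ hx
    simp only [map_add, map_sub, map_mul, map_ofNat, map_zero, hφ3] at hx1
    have hx2 := congrArg φ hx1
    simp only [map_add, map_sub, map_mul, map_ofNat, map_zero, hφ3] at hx2
    have hR : 8 * (x * ε + φ x * φ ε + φ (φ x) * φ (φ ε))
        = 2 * ((x + φ x + φ (φ x)) * (ε + φ ε + φ (φ ε))) := by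
      linear_combination hx + hx1 + hx2
    have hprod2 : (2:L) * ((2 * x - (x + φ x + φ (φ x))) * (2 * ε - (ε + φ ε + φ (φ ε)))) = 0 := by
      linear_combination 4 * hx - hR
    rcases mul_eq_zero.mp ((mul_eq_zero.mp hprod2).resolve_left h2) with h | h
    · have h1 := congrArg φ h
      simp only [map_add, map_sub, map_mul, map_ofNat, map_zero, hφ3] at h1
      have h2' := congrArg φ h1
      simp only [map_add, map_sub, map_mul, map_ofNat, map_zero, hφ3] at h2'
      have h2x : (2 : L) * x = 0 := by linear_combination - h1 - h2'
      exact (mul_eq_zero.mp h2x).resolve_left h2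
    · exfalso
      have h1 := congrArg φ h
      simp only [map_add, map_sub, map_mul, map_ofNat, map_zero, hφ3] at h1
      have h2' := congrArg φ h1
      simp only [map_add, map_sub, map_mul, map_ofNat, map_zero, hφ3] at h2'
      have h2e : (2 : L) * ε = 0 := by linear_combination - h1 - h2'
      exact hε ((mul_eq_zero.mp h2e).resolve_left h2)
  rw [← Finite.injective_iff_bijective]
  intro a b hab
  simp only at hab
  have hD : (f (a + ε) - f a) - (f (b + ε) - f b)
      = 2 * ((a - b) * ε + φ (a - b) * φ ε + φ (φ (a - b)) * φ (φ ε)) + 2 * ((a - b) * ε)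
        - (a - b) * (ε + φ ε + φ (φ ε)) - ε * ((a - b) + φ (a - b) + φ (φ (a - b))) := by
    rw [hfφ (a + ε), hfφ a, hfφ (b + ε), hfφ b]
    simp only [map_add, map_sub]
    ring
  have h0 := key (a - b) (by rw [← hD, hab, sub_self])
  exact sub_eq_zero.mp h0
end

section
/- Let q be an odd prime power. The pentanomial f(X) = X² + X^{q+1} + X^{q²+1} + (1/2)X^{2q} + (1/2)X^{2q²} is planar on F_{q³}. -/
private lemma planar_key {L : Type*} [Field L] (σ : L → L)
    (h0 : σ 0 = 0)
    (hadd : ∀ x y, σ (x + y) = σ x + σ y)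
    (hmul : ∀ x y, σ (x * y) = σ x * σ y)
    (h3 : ∀ x, σ (σ (σ x)) = x)
    (h2 : (2 : L) ≠ 0)
    (ε w : L) (hε : ε ≠ 0)
    (hL0 : w * (ε + σ ε + σ (σ ε)) + ε * (w + σ w + σ (σ w)) + σ w * σ ε
        + σ (σ w) * σ (σ ε) = 0) :
    w = 0 := by
  have t1 := congrArg σ hL0
  simp only [hadd, hmul, h3, h0] at t1
  have t2 := congrArg σ t1
  simp only [hadd, hmul, h3, h0] at t2
  have hsum : 2 * ((ε + σ ε + σ (σ ε)) * (w + σ w + σ (σ w))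
      + (w * ε + σ w * σ ε + σ (σ w) * σ (σ ε))) = 0 := by
    linear_combination hL0 + t1 + t2
  have hs : (ε + σ ε + σ (σ ε)) * (w + σ w + σ (σ w))
      + (w * ε + σ w * σ ε + σ (σ w) * σ (σ ε)) = 0 :=
    (mul_eq_zero.mp hsum).resolve_left h2
  have hfac : (σ w + σ (σ w)) * (σ ε + σ (σ ε)) = 0 := by
    linear_combination hs - hL0
  rcases mul_eq_zero.mp hfac with hl | hr
  · have r1 := congrArg σ hl
    simp only [hadd, h3, h0] at r1
    have r2 := congrArg σ r1
    simp only [hadd, h3, h0] at r2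
    have : (2 : L) * w = 0 := by linear_combination r1 - hl + r2
    rcases mul_eq_zero.mp this with h | h
    · exact absurd h h2
    · exact h
  · have r1 := congrArg σ hr
    simp only [hadd, h3, h0] at r1
    have r2 := congrArg σ r1
    simp only [hadd, h3, h0] at r2
    have : (2 : L) * ε = 0 := by linear_combination r1 - hr + r2
    rcases mul_eq_zero.mp this with h | h
    · exact absurd h h2
    · exact absurd h hε

theorem stmt10 (q : ℕ) (hodd : Odd q) (hpp : ∃ p n : ℕ, Nat.Prime p ∧ 0 < n ∧ q = p ^ n)
    (K L : Type) [Field K] [Field L] [Fintype K] [Fintype L] [Algebra K L]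
    (hK : Fintype.card K = q) (hL : Fintype.card L = q ^ 3)
    (f : L → L)
    (hf : ∀ x : L, f x = x ^ 2 + x ^ q * x + x ^ q ^ 2 * x
        + algebraMap K L (1 / 2) * x ^ (2 * q) + algebraMap K L (1 / 2) * x ^ (2 * q ^ 2)) :
    ∀ ε : L, ε ≠ 0 → Function.Bijective (fun x : L => f (x + ε) - f x) := by
  obtain ⟨p, n, hp, hn, hq⟩ := hpp
  haveI : Fact p.Prime := ⟨hp⟩
  have hq0 : q ≠ 0 := by
    rw [hq]; exact pow_ne_zero n hp.pos.ne'
  have hp2 : p ≠ 2 := by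
    rintro rfl
    have : 2 ∣ q := hq ▸ dvd_pow_self 2 hn.ne'
    exact (Nat.not_even_iff_odd.mpr hodd) (even_iff_two_dvd.mpr this)
  -- characteristic of L is p
  haveI hcharL : CharP L p := by
    haveI := ringChar.charP L
    obtain ⟨m, hrp, hcard⟩ := FiniteField.card L (ringChar L)
    have hdvd : ringChar L ∣ p ^ (3 * n) := by
      have : ringChar L ∣ Fintype.card L := hcard ▸ dvd_pow_self _ m.pos.ne'
      rwa [hL, hq, ← pow_mul, mul_comm n 3] at this
    have : ringChar L = p := by
      have := hrp.dvd_of_dvd_pow hdvd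
      exact (Nat.prime_dvd_prime_iff_eq hrp hp).mp this
    exact this ▸ ringChar.charP L
  have h2 : (2 : L) ≠ 0 := by
    intro h
    have h' : ((2 : ℕ) : L) = 0 := by exact_mod_cast h
    have := (CharP.cast_eq_zero_iff L p 2).mp h'
    exact hp2 ((Nat.prime_dvd_prime_iff_eq hp Nat.prime_two).mp this)
  have hK2 : (2 : K) ≠ 0 := by
    intro h
    apply h2
    have := congrArg (algebraMap K L) h
    rwa [map_ofNat, map_zero] at this
  have h2eq : (2 : L) * algebraMap K L (1 / 2) = 1 := by
    rw [show (2 : L) = algebraMap K L 2 from (map_ofNat _ 2).symm, ← map_mul,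
      ← map_one (algebraMap K L)]
    congr 1
    field_simp
  -- Frobenius facts
  have hadd : ∀ x y : L, (x + y) ^ q = x ^ q + y ^ q := by
    intro x y; rw [hq]; exact add_pow_char_pow x y p n
  have hmul : ∀ x y : L, (x * y) ^ q = x ^ q * y ^ q := fun x y => mul_pow x y q
  have hsub : ∀ x y : L, (x - y) ^ q = x ^ q - y ^ q := by
    intro x y; rw [hq]; exact sub_pow_char_pow x y n
  have h3 : ∀ x : L, ((x ^ q) ^ q) ^ q = x := by
    intro x
    rw [← pow_mul, ← pow_mul, show q * (q * q) = q ^ 3 by ring, ← hL]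
    exact FiniteField.pow_card x
  have h0 : (0 : L) ^ q = 0 := zero_pow hq0
  set h : L := algebraMap K L (1 / 2) with hh
  have hf' : ∀ x : L, f x = x ^ 2 + x ^ q * x + (x ^ q) ^ q * x + h * (x ^ q) ^ 2
      + h * ((x ^ q) ^ q) ^ 2 := by
    intro x
    rw [hf x, show x ^ q ^ 2 = (x ^ q) ^ q by rw [show q ^ 2 = q * q from sq q, pow_mul],
      show x ^ (2 * q) = (x ^ q) ^ 2 by rw [mul_comm, pow_mul],
      show x ^ (2 * q ^ 2) = ((x ^ q) ^ q) ^ 2 by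
        rw [mul_comm, pow_mul, show q ^ 2 = q * q from sq q, pow_mul]]
  intro ε hε
  rw [← Finite.injective_iff_bijective]
  intro x y hxy
  simp only at hxy
  have hD : ∀ u : L, f (u + ε) - f u = u * (ε + ε ^ q + (ε ^ q) ^ q)
      + ε * (u + u ^ q + (u ^ q) ^ q) + u ^ q * ε ^ q + (u ^ q) ^ q * (ε ^ q) ^ q + f ε := by
    intro u
    rw [hf' (u + ε), hf' u, hf' ε]
    simp only [hadd]
    linear_combination (u ^ q * ε ^ q + (u ^ q) ^ q * (ε ^ q) ^ q) * h2eq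
  have hL0 : (x - y) * (ε + ε ^ q + (ε ^ q) ^ q)
      + ε * ((x - y) + (x - y) ^ q + ((x - y) ^ q) ^ q)
      + (x - y) ^ q * ε ^ q + ((x - y) ^ q) ^ q * (ε ^ q) ^ q = 0 := by
    simp only [hsub]
    linear_combination hxy - hD x + hD y
  have hw : x - y = 0 :=
    planar_key (fun z : L => z ^ q) h0 hadd hmul h3 h2 ε (x - y) hε hL0
  exact sub_eq_zero.mp hw
end

section
/- Let q be an odd prime power and ε ∈ F_{q³} nonzero. Then the polynomial expression -2ε^{3q²} + 2ε^{2q²+q} + 2ε^{2q²+1} + 2ε^{q²+2q} - 4ε^{q²+q+1} + 2ε^{q²+2} - 2ε^{3q} + 2ε^{2q+1} + 2ε^{q+2} - 2ε³ is nonzero, since it factors as 2(ε^{q²} - ε^q + ε)(ε^{q²} + ε^q - ε)(-ε^{q²} + ε^q + ε) and each factor is a q-linearized polynomial with no nonzero roots in F_{q³}. -/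
theorem stmt12 (q : ℕ) (hodd : Odd q) (hpp : ∃ p n : ℕ, Nat.Prime p ∧ 0 < n ∧ q = p ^ n)
    (L : Type) [Field L] [Fintype L] (hL : Fintype.card L = q ^ 3)
    (ε : L) (hε : ε ≠ 0) :
    (-2 * ε ^ (3 * q ^ 2) + 2 * (ε ^ (2 * q ^ 2) * ε ^ q) + 2 * (ε ^ (2 * q ^ 2) * ε)
      + 2 * (ε ^ q ^ 2 * ε ^ (2 * q)) - 4 * (ε ^ q ^ 2 * ε ^ q * ε)
      + 2 * (ε ^ q ^ 2 * ε ^ 2) - 2 * ε ^ (3 * q) + 2 * (ε ^ (2 * q) * ε)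
      + 2 * (ε ^ q * ε ^ 2) - 2 * ε ^ 3
        = 2 * (ε ^ q ^ 2 - ε ^ q + ε) * (ε ^ q ^ 2 + ε ^ q - ε) * (-ε ^ q ^ 2 + ε ^ q + ε)) ∧
    (ε ^ q ^ 2 - ε ^ q + ε ≠ 0 ∧ ε ^ q ^ 2 + ε ^ q - ε ≠ 0 ∧ -ε ^ q ^ 2 + ε ^ q + ε ≠ 0) ∧
    -2 * ε ^ (3 * q ^ 2) + 2 * (ε ^ (2 * q ^ 2) * ε ^ q) + 2 * (ε ^ (2 * q ^ 2) * ε)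
      + 2 * (ε ^ q ^ 2 * ε ^ (2 * q)) - 4 * (ε ^ q ^ 2 * ε ^ q * ε)
      + 2 * (ε ^ q ^ 2 * ε ^ 2) - 2 * ε ^ (3 * q) + 2 * (ε ^ (2 * q) * ε)
      + 2 * (ε ^ q * ε ^ 2) - 2 * ε ^ 3 ≠ 0 := by
  obtain ⟨p, n, hp, hn, hq⟩ := hpp
  -- characteristic of L is p
  have hrp : (ringChar L).Prime := CharP.char_is_prime L (ringChar L)
  haveI : CharP L (ringChar L) := ringChar.charP L
  obtain ⟨m, _, hcard⟩ := FiniteField.card L (ringChar L)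
  have hpr : p = ringChar L := by
    have h1 : p ∣ (ringChar L) ^ (m : ℕ) := by
      rw [← hcard, hL, hq, ← pow_mul]
      exact dvd_pow_self p (by positivity)
    exact (Nat.prime_dvd_prime_iff_eq hp hrp).mp (hp.dvd_of_dvd_pow h1)
  haveI hcp : CharP L p := hpr ▸ ringChar.charP L
  haveI : Fact p.Prime := ⟨hp⟩
  haveI : ExpChar L p := ExpChar.prime hp
  have hpodd : p ≠ 2 := by
    rintro rfl
    have : Even q := by rw [hq]; exact Nat.even_pow.mpr ⟨even_two, hn.ne'⟩
    exact (Nat.not_odd_iff_even.mpr this) hodd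
  have h2 : (2 : L) ≠ 0 := by
    intro h
    have hd := (CharP.cast_eq_zero_iff L p 2).mp (by exact_mod_cast h)
    exact hpodd ((Nat.prime_dvd_prime_iff_eq hp Nat.prime_two).mp hd)
  -- frobenius map
  set f := iterateFrobenius L p n with hf
  have hfx : ∀ x : L, f x = x ^ q := by
    intro x; rw [hf, iterateFrobenius_def, hq]
  have hq3 : ∀ x : L, x ^ q ^ 3 = x := by
    intro x; rw [← hL, FiniteField.pow_card]
  have hfa : f ε = ε ^ q := hfx ε
  have hfb : f (ε ^ q) = ε ^ q ^ 2 := by rw [hfx, ← pow_mul, pow_two]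
  have hfc : f (ε ^ q ^ 2) = ε := by rw [hfx, ← pow_mul, ← pow_succ]; exact hq3 ε
  have k1 : ε ^ q ^ 2 - ε ^ q + ε ≠ 0 := by
    intro h
    have h' : ε - ε ^ q ^ 2 + ε ^ q = 0 := by
      have := congrArg f h
      rwa [map_add, map_sub, hfa, hfb, hfc, map_zero] at this
    have hcb : (2 : L) * (ε ^ q ^ 2 - ε ^ q) = 0 := by linear_combination h - h'
    have : ε ^ q ^ 2 = ε ^ q := by
      have := mul_eq_zero.mp hcb
      rcases this with h2' | h2'
      · exact absurd h2' h2
      · linear_combination h2'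
    exact hε (by linear_combination h - this)
  have k2 : ε ^ q ^ 2 + ε ^ q - ε ≠ 0 := by
    intro h
    have h' : ε + ε ^ q ^ 2 - ε ^ q = 0 := by
      have := congrArg f h
      rwa [map_sub, map_add, hfa, hfb, hfc, map_zero] at this
    have hcb : (2 : L) * (ε ^ q ^ 2) = 0 := by linear_combination h + h'
    have hc0 : ε ^ q ^ 2 = 0 := by
      rcases mul_eq_zero.mp hcb with h2' | h2'
      · exact absurd h2' h2
      · exact h2'
    exact pow_ne_zero _ hε hc0
  have k3 : -ε ^ q ^ 2 + ε ^ q + ε ≠ 0 := by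
    intro h
    have h' : -ε + ε ^ q ^ 2 + ε ^ q = 0 := by
      have := congrArg f h
      rwa [map_add, map_add, map_neg, hfa, hfb, hfc, map_zero] at this
    have hcb : (2 : L) * (ε ^ q) = 0 := by linear_combination h + h'
    have hb0 : ε ^ q = 0 := by
      rcases mul_eq_zero.mp hcb with h2' | h2'
      · exact absurd h2' h2
      · exact h2'
    exact pow_ne_zero _ hε hb0
  have heq : (-2 * ε ^ (3 * q ^ 2) + 2 * (ε ^ (2 * q ^ 2) * ε ^ q) + 2 * (ε ^ (2 * q ^ 2) * ε)
      + 2 * (ε ^ q ^ 2 * ε ^ (2 * q)) - 4 * (ε ^ q ^ 2 * ε ^ q * ε)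
      + 2 * (ε ^ q ^ 2 * ε ^ 2) - 2 * ε ^ (3 * q) + 2 * (ε ^ (2 * q) * ε)
      + 2 * (ε ^ q * ε ^ 2) - 2 * ε ^ 3
        = 2 * (ε ^ q ^ 2 - ε ^ q + ε) * (ε ^ q ^ 2 + ε ^ q - ε) * (-ε ^ q ^ 2 + ε ^ q + ε)) := by
    rw [show 3 * q ^ 2 = q ^ 2 * 3 by ring, show 2 * q ^ 2 = q ^ 2 * 2 by ring,
      show 2 * q = q * 2 by ring, show 3 * q = q * 3 by ring, pow_mul, pow_mul, pow_mul, pow_mul]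
    ring
  refine ⟨heq, ⟨k1, k2, k3⟩, ?_⟩
  rw [heq]
  exact mul_ne_zero (mul_ne_zero (mul_ne_zero h2 k1) k2) k3
end

section
/- Let q be an odd prime power. The polynomial L(X) = X^{q²} - X^q + X has no roots in F_{q³}*. -/
theorem stmt13 (q : ℕ) (hodd : Odd q) (hpp : ∃ p n : ℕ, Nat.Prime p ∧ 0 < n ∧ q = p ^ n)
    (L : Type) [Field L] [Fintype L] (hL : Fintype.card L = q ^ 3) :
    ∀ x : L, x ≠ 0 → x ^ q ^ 2 - x ^ q + x ≠ 0 := by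
  obtain ⟨p, n, hp, hn, hq⟩ := hpp
  have hpL : (p : L) = 0 := by
    have hcard : ((Fintype.card L : ℕ) : L) = 0 := FiniteField.cast_card_eq_zero L
    rw [hL, hq] at hcard
    push_cast at hcard
    have := pow_eq_zero_iff (n := n * 3) (by positivity) |>.mp (by
      rw [← pow_mul] at hcard; exact hcard)
    exact this
  haveI hchar : CharP L p := (CharP.charP_iff_prime_eq_zero hp).mpr hpL
  have hpodd : Odd p := by
    rcases Nat.Prime.eq_two_or_odd' hp with h2 | h
    · exfalso
      have : Even q := by
        rw [hq, h2]
        exact (Nat.even_pow' hn.ne').mpr even_two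
      exact (Nat.not_even_iff_odd.mpr hodd) this
    · exact h
  intro x hx hzero
  haveI : Fact (Nat.Prime p) := ⟨hp⟩
  have key : ∀ a b : L, (a - b) ^ q = a ^ q - b ^ q := by
    intro a b
    rw [hq]
    exact sub_pow_char_pow a b n
  have h3 : x ^ q ^ 3 = x := by rw [← hL]; exact FiniteField.pow_card x
  have h1 : x ^ q ^ 2 = x ^ q - x := by linear_combination hzero
  have h2 : x = x ^ q ^ 2 - x ^ q := by
    calc x = x ^ q ^ 3 := h3.symm
    _ = (x ^ q ^ 2) ^ q := by rw [← pow_mul, ← pow_succ]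
    _ = (x ^ q - x) ^ q := by rw [h1]
    _ = (x ^ q) ^ q - x ^ q := key _ _
    _ = x ^ q ^ 2 - x ^ q := by rw [← pow_mul, ← pow_two]
  have h2x : (2 : L) * x = 0 := by linear_combination h2 + h1
  have h2ne : (2 : L) ≠ 0 := by
    intro h
    have : (p : ℕ) ∣ 2 := (CharP.cast_eq_zero_iff L p 2).mp (by exact_mod_cast h)
    have := (Nat.prime_dvd_prime_iff_eq hp Nat.prime_two).mp this
    rw [this] at hpodd
    exact (Nat.not_even_iff_odd.mpr hpodd) even_two
  rcases mul_eq_zero.mp h2x with h | h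
  · exact h2ne h
  · exact hx h
end

section
/- Let q be an odd prime power. If for each ε ∈ F_{q³}*, the Dickson determinant Δ_ε of the q-linearized polynomial (2Eε + Aε^q + Bε^{q²})X + (Aε + 2Cε^q)X^q + (Bε + 2Dε^{q²})X^{q²} is nonzero, then f(X) = EX² + AX^{q+1} + BX^{q²+1} + CX^{2q} + DX^{2q²} is planar on F_{q³}. -/
theorem stmt16 (q : ℕ) (hodd : Odd q) (hpp : ∃ p n : ℕ, Nat.Prime p ∧ 0 < n ∧ q = p ^ n)
    (K L : Type) [Field K] [Field L] [Fintype K] [Fintype L] [Algebra K L]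
    (hK : Fintype.card K = q) (hL : Fintype.card L = q ^ 3)
    (A B C D E : K) (f : L → L)
    (hf : ∀ x : L, f x = algebraMap K L E * x ^ 2 + algebraMap K L A * (x ^ q * x)
        + algebraMap K L B * (x ^ q ^ 2 * x) + algebraMap K L C * x ^ (2 * q)
        + algebraMap K L D * x ^ (2 * q ^ 2))
    (hΔ : ∀ ε : L, ε ≠ 0 →
      Matrix.det
        !![2 * algebraMap K L E * ε + algebraMap K L A * ε ^ q + algebraMap K L B * ε ^ q ^ 2,
           algebraMap K L A * ε + 2 * algebraMap K L C * ε ^ q,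
           algebraMap K L B * ε + 2 * algebraMap K L D * ε ^ q ^ 2;
           (algebraMap K L B * ε + 2 * algebraMap K L D * ε ^ q ^ 2) ^ q,
           (2 * algebraMap K L E * ε + algebraMap K L A * ε ^ q + algebraMap K L B * ε ^ q ^ 2) ^ q,
           (algebraMap K L A * ε + 2 * algebraMap K L C * ε ^ q) ^ q;
           (algebraMap K L A * ε + 2 * algebraMap K L C * ε ^ q) ^ q ^ 2,
           (algebraMap K L B * ε + 2 * algebraMap K L D * ε ^ q ^ 2) ^ q ^ 2,
           (2 * algebraMap K L E * ε + algebraMap K L A * ε ^ q + algebraMap K L B * ε ^ q ^ 2) ^ q ^ 2]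
        ≠ 0) :
    ∀ ε : L, ε ≠ 0 → Function.Bijective (fun x : L => f (x + ε) - f x) := by
  obtain ⟨p, n, hp, hn, hq⟩ := hpp
  haveI : Fact p.Prime := ⟨hp⟩
  haveI hchar : CharP L p := by
    obtain ⟨r, hr⟩ := CharP.exists L
    haveI := hr
    have hrp : r.Prime := CharP.char_is_prime L r
    obtain ⟨m, _, hm⟩ := FiniteField.card L r
    have hdvd : p ∣ r ^ (m : ℕ) := by
      rw [← hm, hL, hq, ← pow_mul]
      exact dvd_pow_self p (by positivity)
    have hpr : p = r := (Nat.prime_dvd_prime_iff_eq hp hrp).1 (hp.dvd_of_dvd_pow hdvd)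
    rwa [hpr]
  set F : L →+* L := iterateFrobenius L p n with hFdef
  have hF : ∀ x : L, F x = x ^ q := fun x => by
    rw [hFdef, iterateFrobenius_def, hq]
  have hq2 : ∀ x : L, (x ^ q) ^ q = x ^ q ^ 2 := fun x => by
    rw [← pow_mul, pow_two]
  have hq3 : ∀ x : L, (x ^ q ^ 2) ^ q = x := fun x => by
    rw [← pow_mul, ← pow_succ, ← hL]
    exact FiniteField.pow_card x
  intro ε hε
  set A' := algebraMap K L A with hA'
  set B' := algebraMap K L B with hB'
  set C' := algebraMap K L C with hC'
  set D' := algebraMap K L D with hD'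
  set E' := algebraMap K L E with hE'
  set c₀ := 2 * E' * ε + A' * ε ^ q + B' * ε ^ q ^ 2 with hc₀
  set c₁ := A' * ε + 2 * C' * ε ^ q with hc₁
  set c₂ := B' * ε + 2 * D' * ε ^ q ^ 2 with hc₂
  have hfun : (fun x : L => f (x + ε) - f x)
      = fun x => c₀ * x + c₁ * x ^ q + c₂ * x ^ q ^ 2 + f ε := by
    funext x
    have e1 : (x + ε) ^ q = x ^ q + ε ^ q := by
      rw [← hF, ← hF, ← hF, map_add]
    have e2 : (x + ε) ^ q ^ 2 = x ^ q ^ 2 + ε ^ q ^ 2 := by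
      rw [← hq2, e1, ← hF, map_add, hF, hF, hq2, hq2]
    simp only [hf, hc₀, hc₁, hc₂]
    rw [show 2 * q = q * 2 from mul_comm 2 q,
      show 2 * q ^ 2 = q ^ 2 * 2 from mul_comm 2 (q ^ 2)]
    simp only [pow_mul]
    rw [e1, e2]
    ring
  rw [hfun]
  refine Finite.injective_iff_bijective.1 ?_
  intro a b hab
  simp only at hab
  set x := a - b with hx
  have hxq : x ^ q = a ^ q - b ^ q := by rw [← hF, ← hF, ← hF, map_sub]
  have hxq2 : x ^ q ^ 2 = a ^ q ^ 2 - b ^ q ^ 2 := by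
    rw [← hq2, hxq, ← hF, map_sub, hF, hF, hq2, hq2]
  have e0 : c₀ * x + c₁ * x ^ q + c₂ * x ^ q ^ 2 = 0 := by
    rw [hxq, hxq2, hx]
    linear_combination hab
  have e1 : c₂ ^ q * x + c₀ ^ q * x ^ q + c₁ ^ q * x ^ q ^ 2 = 0 := by
    have h := congrArg F e0
    rw [map_add, map_add, map_mul, map_mul, map_mul, map_zero] at h
    simp only [hF, hq2, hq3] at h
    linear_combination h
  have e2 : c₁ ^ q ^ 2 * x + c₂ ^ q ^ 2 * x ^ q + c₀ ^ q ^ 2 * x ^ q ^ 2 = 0 := by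
    have h := congrArg F e1
    rw [map_add, map_add, map_mul, map_mul, map_mul, map_zero] at h
    simp only [hF, hq2, hq3] at h
    linear_combination h
  have hM : Matrix.mulVec
      !![c₀, c₁, c₂; c₂ ^ q, c₀ ^ q, c₁ ^ q; c₁ ^ q ^ 2, c₂ ^ q ^ 2, c₀ ^ q ^ 2]
      ![x, x ^ q, x ^ q ^ 2] = 0 := by
    funext i
    fin_cases i <;>
      simp [Matrix.mulVec, dotProduct, Fin.sum_univ_three] <;>
      first
        | linear_combination e0
        | linear_combination e1
        | linear_combination e2
  have hv : ![x, x ^ q, x ^ q ^ 2] = 0 :=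
    Matrix.eq_zero_of_mulVec_eq_zero (hΔ ε hε) hM
  have hx0 : x = 0 := congrFun hv 0
  have : a = b := sub_eq_zero.1 hx0
  simpa using this
end

section
/- Let q be an odd prime power and B ∈ F_q with B³ = 4. Then the polynomial f(X) = -(B/2)X² + BX^{q²+1} + (2/B²)X^{2q} - (B/2)X^{2q²} is planar on F_{q³}. -/
private theorem charAux {F : Type} [Field F] [Fintype F] {p m : ℕ} (hp : p.Prime)
    (hm : m ≠ 0) (hcard : Fintype.card F = p ^ m) : CharP F p := by
  haveI : CharP F (ringChar F) := ringChar.charP F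
  obtain ⟨k, hk, hFk⟩ := FiniteField.card F (ringChar F)
  have hdvd : p ∣ ringChar F ^ (k : ℕ) := by
    rw [← hFk, hcard]; exact dvd_pow_self p hm
  have hpr : p = ringChar F :=
    (Nat.prime_dvd_prime_iff_eq hp hk).mp (hp.dvd_of_dvd_pow hdvd)
  rw [hpr]; exact ringChar.charP F

private theorem keyAux {L : Type} [Field L] (h2 : (2 : L) ≠ 0)
    (φ : L →+* L) (u z : L) (hu : u ≠ 0)
    (hu3 : φ (φ (φ u)) = u) (hz3 : φ (φ (φ z)) = z)
    (E0 : (φ (φ u) - u) * z + φ u * φ z + (u - φ (φ u)) * (φ (φ z)) = 0) :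
    z = 0 := by
  set v := φ u with hv
  set w := φ v with hw
  set z1 := φ z with hz1
  set z2 := φ z1 with hz2
  -- hu3 : φ w = u, hz3 : φ z2 = z
  have E1 : (u - v) * z1 + w * z2 + (v - u) * z = 0 := by
    have h := congrArg φ E0
    simp only [map_add, map_mul, map_sub, map_zero] at h
    rw [hu3, hz3, ← hw, ← hz2, ← hv, ← hz1] at h
    linear_combination h
  have E2 : (v - w) * z2 + u * z + (w - v) * z1 = 0 := by
    have h := congrArg φ E1
    simp only [map_add, map_mul, map_sub, map_zero] at h
    rw [hu3, hz3, ← hw, ← hz2, ← hv, ← hz1] at h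
    linear_combination h
  have hwne : w ≠ 0 := by
    intro h0
    apply hu
    rw [← hu3, h0, map_zero]
  have hcyc0 : φ (v + w - u) = w + u - v := by
    simp only [map_add, map_sub]
    rw [hu3, ← hw, ← hv]
  have hcyc1 : φ (w + u - v) = u + v - w := by
    simp only [map_add, map_sub]
    rw [hu3, ← hw, ← hv]
  have hcyc2 : φ (u + v - w) = v + w - u := by
    simp only [map_add, map_sub]
    rw [hu3, ← hw, ← hv]
  have key0 : v + w - u = 0 → False := by
    intro h0
    have h1 : w + u - v = 0 := by rw [← hcyc0, h0, map_zero]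
    have h2w : (2 : L) * w = 0 := by linear_combination h0 + h1
    exact hwne ((mul_eq_zero.mp h2w).resolve_left h2)
  have f0 : v + w - u ≠ 0 := key0
  have f2 : u + v - w ≠ 0 := fun h0 => key0 (by rw [← hcyc2, h0, map_zero])
  have f1 : w + u - v ≠ 0 := fun h0 => f2 (by rw [← hcyc1, h0, map_zero])
  have hd : (v + w - u) * ((w + u - v) * (u + v - w)) ≠ 0 :=
    mul_ne_zero f0 (mul_ne_zero f1 f2)
  have hz : (v + w - u) * ((w + u - v) * (u + v - w)) * z = 0 := by
    linear_combination ((v - w) * (u - v + w)) * E0 +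
      (-((v - w) * (u + v - w))) * E1 + (v * w - (u - w) * (u - v)) * E2
  rcases mul_eq_zero.mp hz with h | h
  · exact absurd h hd
  · exact h

theorem stmt17 (q : ℕ) (hodd : Odd q) (hpp : ∃ p n : ℕ, Nat.Prime p ∧ 0 < n ∧ q = p ^ n)
    (K L : Type) [Field K] [Field L] [Fintype K] [Fintype L] [Algebra K L]
    (hK : Fintype.card K = q) (hL : Fintype.card L = q ^ 3)
    (B : K) (hB : B ^ 3 = 4) (f : L → L)
    (hf : ∀ x : L, f x = algebraMap K L (-(B / 2)) * x ^ 2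
        + algebraMap K L B * (x ^ q ^ 2 * x)
        + algebraMap K L (2 / B ^ 2) * x ^ (2 * q)
        + algebraMap K L (-(B / 2)) * x ^ (2 * q ^ 2)) :
    ∀ ε : L, ε ≠ 0 → Function.Bijective (fun x : L => f (x + ε) - f x) := by
  obtain ⟨p, n, hp, hn, hqpn⟩ := hpp
  haveI : Fact p.Prime := ⟨hp⟩
  have hp2 : p ≠ 2 := by
    intro h
    apply Nat.not_even_iff_odd.mpr hodd
    rw [hqpn, h]
    exact (Nat.even_pow).mpr ⟨even_two, hn.ne'⟩
  haveI hcharK : CharP K p := charAux hp hn.ne' (by rw [hK, hqpn])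
  haveI hcharL : CharP L p := charAux hp (by positivity : n * 3 ≠ 0)
    (by rw [hL, hqpn, ← pow_mul])
  have h2L : (2 : L) ≠ 0 := by
    intro h
    have hd2 : (p : ℕ) ∣ 2 := (CharP.cast_eq_zero_iff L p 2).mp (by exact_mod_cast h)
    exact hp2 ((Nat.prime_dvd_prime_iff_eq hp Nat.prime_two).mp hd2)
  have h2K : (2 : K) ≠ 0 := by
    intro h
    have hd2 : (p : ℕ) ∣ 2 := (CharP.cast_eq_zero_iff K p 2).mp (by exact_mod_cast h)
    exact hp2 ((Nat.prime_dvd_prime_iff_eq hp Nat.prime_two).mp hd2)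
  have hBne : B ≠ 0 := by
    intro h
    rw [h] at hB
    have h4 : (4 : K) = 0 := by rw [← hB]; ring
    have : (2 : K) * 2 = 0 := by rw [← h4]; norm_num
    exact h2L (by exact_mod_cast False.elim (h2K ((mul_self_eq_zero).mp this)))
  -- Frobenius
  set φ : L →+* L := iterateFrobenius L p n with hφdef
  have hφ : ∀ x : L, φ x = x ^ q := by
    intro x
    rw [hφdef, iterateFrobenius_def, ← hqpn]
  have hpow2 : ∀ c : L, c ^ q ^ 2 = (c ^ q) ^ q := by
    intro c
    rw [sq, pow_mul]
  have hq3 : ∀ x : L, φ (φ (φ x)) = x := by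
    intro x
    have hc := FiniteField.pow_card x
    rw [hL] at hc
    rw [hφ, hφ, hφ, ← pow_mul, ← pow_mul, show q * (q * q) = q ^ 3 by ring]
    exact hc
  have haddq : ∀ a b : L, (a + b) ^ q = a ^ q + b ^ q := by
    intro a b; rw [← hφ, ← hφ, ← hφ, map_add]
  have hsubq : ∀ a b : L, (a - b) ^ q = a ^ q - b ^ q := by
    intro a b; rw [← hφ, ← hφ, ← hφ, map_sub]
  have haddq2 : ∀ a b : L, (a + b) ^ q ^ 2 = a ^ q ^ 2 + b ^ q ^ 2 := by
    intro a b; rw [hpow2, hpow2, hpow2, haddq, haddq]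
  have hsubq2 : ∀ a b : L, (a - b) ^ q ^ 2 = a ^ q ^ 2 - b ^ q ^ 2 := by
    intro a b; rw [hpow2, hpow2, hpow2, hsubq, hsubq]
  have hpow2q : ∀ c : L, c ^ (2 * q) = (c ^ q) ^ 2 := by
    intro c; rw [mul_comm, pow_mul]
  have hpow2q2 : ∀ c : L, c ^ (2 * q ^ 2) = (c ^ q ^ 2) ^ 2 := by
    intro c; rw [mul_comm, pow_mul]
  -- coefficient relations
  have hrel1 : (2 : L) * algebraMap K L (-(B / 2)) = -(algebraMap K L B) := by
    have hk : (2 : K) * (-(B / 2)) = -B := by field_simp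
    rw [← map_ofNat (algebraMap K L) 2, ← map_mul, hk, map_neg]
  have hrel2 : (2 : L) * algebraMap K L (2 / B ^ 2) = algebraMap K L B := by
    have hk : (2 : K) * (2 / B ^ 2) = B := by
      field_simp
      linear_combination -hB
    rw [← map_ofNat (algebraMap K L) 2, ← map_mul, hk]
  have hBLne : algebraMap K L B ≠ 0 :=
    fun h => hBne ((algebraMap K L).injective (by rw [h, map_zero]))
  intro ε hε
  rw [← Finite.injective_iff_bijective]
  intro x y hxy
  dsimp only at hxy
  rw [hf (x + ε), hf x, hf (y + ε), hf y] at hxy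
  simp only [hpow2q, hpow2q2, haddq, haddq2] at hxy
  have E0' : algebraMap K L B * ((ε ^ q ^ 2 - ε) * (x - y) + ε ^ q * (x ^ q - y ^ q)
      + (ε - ε ^ q ^ 2) * (x ^ q ^ 2 - y ^ q ^ 2)) = 0 := by
    linear_combination hxy - (ε * (x - y) + ε ^ q ^ 2 * (x ^ q ^ 2 - y ^ q ^ 2)) * hrel1
      - (ε ^ q * (x ^ q - y ^ q)) * hrel2
  have E0 : (ε ^ q ^ 2 - ε) * (x - y) + ε ^ q * (x - y) ^ q
      + (ε - ε ^ q ^ 2) * ((x - y) ^ q ^ 2) = 0 := by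
    rw [hsubq, hsubq2]
    exact (mul_eq_zero.mp E0').resolve_left hBLne
  have hφ2 : ∀ c : L, φ (φ c) = c ^ q ^ 2 := by
    intro c; rw [hφ, hφ, ← hpow2]
  have hz : x - y = 0 := by
    apply keyAux h2L φ ε (x - y) hε (hq3 ε) (hq3 (x - y))
    rw [hφ2 ε, hφ2 (x - y), hφ ε, hφ (x - y)]
    exact E0
  exact sub_eq_zero.mp hz
end
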